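/- arXiv:0810.2711 — 7 statements merged into one kernel-verified Lean document; each statement's English description precedes it below -/
import Mathlib

section
/- Let P₀, P₁, P₂, P₃ ∈ ℝ² be the vertices of a quadrilateral, and set J := min over j ∈ {0,1,2,3} of det(P_{j+1} − P_j, P_{j−1} − P_j), indices taken mod 4. Define v(t) := (1−t)·(P₁ − P₀) + t·(P₂ − P₃) and w(s) := (1−s)·(P₃ − P₀) + s·(P₂ − P₁) for s, t ∈ [0,1]. Then det(v(t), w(s)) ≥ J for all (s,t) ∈ [0,1]². In particular, the strict convexity condition J > 0 implies det(v(t), w(s)) ≥ J > 0 on all of [0,1]². -/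
/-- The planar determinant `det(v,w) = v₁w₂ − v₂w₁` of two vectors in ℝ². -/
noncomputable def det2 (v w : EuclideanSpace ℝ (Fin 2)) : ℝ := v 0 * w 1 - v 1 * w 0

/-!
The map `(s, t) ↦ det(v(t), w(s))` is affine in each variable, so on `[0,1]²` it is the bilinear
interpolation of its four corner values, a convex combination of them. Up to the antisymmetry of
`det`, the corner values are exactly the four vertex determinants, each of which is at least `J`.
-/

lemma det2_neg_neg (a b : EuclideanSpace ℝ (Fin 2)) : det2 (-a) (-b) = det2 a b := by
  simp only [det2, PiLp.neg_apply]
  ring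

lemma det2_neg_left_comm (a b : EuclideanSpace ℝ (Fin 2)) : det2 (-b) a = det2 a b := by
  simp only [det2, PiLp.neg_apply]
  ring

lemma det2_neg_right_comm (a b : EuclideanSpace ℝ (Fin 2)) : det2 b (-a) = det2 a b := by
  simp only [det2, PiLp.neg_apply]
  ring

lemma det2_convexComb_convexComb (a b c d : EuclideanSpace ℝ (Fin 2)) (s t : ℝ) :
    det2 ((1 - t) • a + t • b) ((1 - s) • c + s • d) =
      (1 - t) * (1 - s) * det2 a c + (1 - t) * s * det2 a d +
        t * (1 - s) * det2 b c + t * s * det2 b d := by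
  simp only [det2, PiLp.add_apply, PiLp.smul_apply, smul_eq_mul]
  ring

lemma le_bilinear_interpolation {𝕜 : Type*} [Field 𝕜] [LinearOrder 𝕜] [IsStrictOrderedRing 𝕜]
    {J a b c d s t : 𝕜} (hs : s ∈ Set.Icc (0 : 𝕜) 1) (ht : t ∈ Set.Icc (0 : 𝕜) 1)
    (ha : J ≤ a) (hb : J ≤ b) (hc : J ≤ c) (hd : J ≤ d) :
    J ≤ (1 - t) * (1 - s) * a + (1 - t) * s * b + t * (1 - s) * c + t * s * d := by
  have := hs.1; have := ht.1
  have : 0 ≤ 1 - s := sub_nonneg.2 hs.2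
  have : 0 ≤ 1 - t := sub_nonneg.2 ht.2
  calc J = (1 - t) * (1 - s) * J + (1 - t) * s * J + t * (1 - s) * J + t * s * J := by ring
    _ ≤ _ := by gcongr

/-- For a quadrilateral with vertices `P 0, P 1, P 2, P 3` in ℝ², with
`J := min_j det(P (j+1) − P j, P (j−1) − P j)` (indices mod 4),
the vectors `v(t) = (1−t)(P₁−P₀) + t(P₂−P₃)` and `w(s) = (1−s)(P₃−P₀) + s(P₂−P₁)`
satisfy `det(v(t), w(s)) ≥ J` for all `(s,t) ∈ [0,1]²`. -/
theorem det_vw_ge_J (P : Fin 4 → EuclideanSpace ℝ (Fin 2)) (J : ℝ)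
    (hJ : J = ⨅ j : Fin 4, det2 (P (j + 1) - P j) (P (j - 1) - P j))
    (v w : ℝ → EuclideanSpace ℝ (Fin 2))
    (hv : ∀ t : ℝ, v t = (1 - t) • (P 1 - P 0) + t • (P 2 - P 3))
    (hw : ∀ s : ℝ, w s = (1 - s) • (P 3 - P 0) + s • (P 2 - P 1)) :
    ∀ s ∈ Set.Icc (0 : ℝ) 1, ∀ t ∈ Set.Icc (0 : ℝ) 1, J ≤ det2 (v t) (w s) := by
  have hvertex (j : Fin 4) : J ≤ det2 (P (j + 1) - P j) (P (j - 1) - P j) :=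
    hJ ▸ ciInf_le (Set.finite_range _).bddBelow j
  have h00 : J ≤ det2 (P 1 - P 0) (P 3 - P 0) := hvertex 0
  have h01 : J ≤ det2 (P 1 - P 0) (P 2 - P 1) := by
    have h : J ≤ det2 (P 2 - P 1) (P 0 - P 1) := hvertex 1
    rwa [← neg_sub (P 1) (P 0), det2_neg_right_comm] at h
  have h10 : J ≤ det2 (P 2 - P 3) (P 3 - P 0) := by
    have h : J ≤ det2 (P 0 - P 3) (P 2 - P 3) := hvertex 3
    rwa [← neg_sub (P 3) (P 0), det2_neg_left_comm] at h
  have h11 : J ≤ det2 (P 2 - P 3) (P 2 - P 1) := by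
    have h : J ≤ det2 (P 3 - P 2) (P 1 - P 2) := hvertex 2
    rwa [← neg_sub (P 2) (P 3), ← neg_sub (P 2) (P 1), det2_neg_neg] at h
  intro s hs t ht
  rw [hv, hw, det2_convexComb_convexComb]
  exact le_bilinear_interpolation hs ht h00 h01 h10 h11
end

section
/- Let P₀, P₁, P₂, P₃ ∈ ℝ² be the vertices (counterclockwise) of a strictly convex quadrilateral, i.e. J := min over j ∈ {0,1,2,3} of det(P_{j+1} − P_j, P_{j−1} − P_j) > 0 (indices mod 4). Define v(t) := (1−t)·(P₁−P₀) + t·(P₂−P₃), w(s) := (1−s)·(P₃−P₀) + s·(P₂−P₁), and Q(s,t) := P₀ + s·v(0) + t·w(s) for (s,t) ∈ [0,1]². Let D be the maximal Euclidean distance between two of the four vertices (the diameter of the quadrilateral). Then for all (s,t), (s',t') ∈ [0,1]²: |Q(s',t') − Q(s,t)| ≤ D·(|s'−s| + |t'−t|) and |Q(s',t') − Q(s,t)| ≥ (J/D)·max{|s'−s|, |t'−t|}. In particular Q is a bi-Lipschitz map from the unit square onto the quadrilateral. -/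
open Set

section Det2

variable (a b c u w : EuclideanSpace ℝ (Fin 2)) (x y : ℝ)

lemma det2_self : det2 a a = 0 := by
  simp only [det2]
  ring

lemma det2_smul_add_smul_left : det2 (x • a + y • b) c = x * det2 a c + y * det2 b c := by
  simp only [det2, PiLp.add_apply, PiLp.smul_apply, smul_eq_mul]
  ring

lemma det2_smul_add_smul_right : det2 c (x • a + y • b) = x * det2 c a + y * det2 c b := by
  simp only [det2, PiLp.add_apply, PiLp.smul_apply, smul_eq_mul]
  ring

lemma det2_smul_add_smul_left_self : det2 (x • u + y • w) w = x * det2 u w := by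
  rw [det2_smul_add_smul_left, det2_self, mul_zero, add_zero]

lemma det2_smul_add_smul_right_self : det2 u (x • u + y • w) = y * det2 u w := by
  rw [det2_smul_add_smul_right, det2_self, mul_zero, zero_add]

/-- By Lagrange's identity `det2 a b ^ 2 + ⟪a, b⟫ ^ 2 = ‖a‖ ^ 2 * ‖b‖ ^ 2`. -/
lemma abs_det2_le : |det2 a b| ≤ ‖a‖ * ‖b‖ := by
  refine abs_le_of_sq_le_sq ?_ (by positivity)
  rw [mul_pow, EuclideanSpace.real_norm_sq_eq, EuclideanSpace.real_norm_sq_eq]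
  simp only [det2, Fin.sum_univ_two]
  nlinarith [sq_nonneg (a 0 * b 0 + a 1 * b 1)]

end Det2

lemma le_sub_mul_add_mul {J p q t : ℝ} (ht : t ∈ Icc (0 : ℝ) 1) (hp : J ≤ p) (hq : J ≤ q) :
    J ≤ (1 - t) * p + t * q :=
  convex_Ici J hp hq (sub_nonneg.2 ht.2) ht.1 (sub_add_cancel 1 t)

lemma norm_sub_smul_add_smul_le {E : Type*} [SeminormedAddCommGroup E] [NormedSpace ℝ E]
    {x y : E} {D t : ℝ} (ht : t ∈ Icc (0 : ℝ) 1) (hx : ‖x‖ ≤ D) (hy : ‖y‖ ≤ D) :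
    ‖(1 - t) • x + t • y‖ ≤ D := by
  rw [← mem_closedBall_zero_iff] at hx hy ⊢
  exact convex_closedBall 0 D hx hy (sub_nonneg.2 ht.2) ht.1 (sub_add_cancel 1 t)

lemma le_det2_of_le_corners {a b c d : EuclideanSpace ℝ (Fin 2)} {J s t : ℝ}
    (hs : s ∈ Icc (0 : ℝ) 1) (ht : t ∈ Icc (0 : ℝ) 1)
    (hac : J ≤ det2 a c) (had : J ≤ det2 a d) (hbc : J ≤ det2 b c) (hbd : J ≤ det2 b d) :
    J ≤ det2 ((1 - t) • a + t • b) ((1 - s) • c + s • d) := by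
  rw [det2_smul_add_smul_left, det2_smul_add_smul_right, det2_smul_add_smul_right]
  exact le_sub_mul_add_mul ht (le_sub_mul_add_mul hs hac had) (le_sub_mul_add_mul hs hbc hbd)

lemma norm_smul_add_smul_le {E : Type*} [SeminormedAddCommGroup E] [NormedSpace ℝ E]
    {u w : E} {D : ℝ} (hu : ‖u‖ ≤ D) (hw : ‖w‖ ≤ D) (x y : ℝ) :
    ‖x • u + y • w‖ ≤ D * (|x| + |y|) :=
  calc ‖x • u + y • w‖ ≤ |x| * ‖u‖ + |y| * ‖w‖ := by
        simpa only [norm_smul, Real.norm_eq_abs] using norm_add_le (x • u) (y • w)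
    _ ≤ |x| * D + |y| * D := by gcongr
    _ = D * (|x| + |y|) := by ring

lemma mul_max_abs_le_norm_smul_add_smul_mul {u w : EuclideanSpace ℝ (Fin 2)} {J D : ℝ}
    (hJ : J ≤ det2 u w) (hu : ‖u‖ ≤ D) (hw : ‖w‖ ≤ D) (x y : ℝ) :
    J * max |x| |y| ≤ ‖x • u + y • w‖ * D := by
  set z := x • u + y • w
  have bound (r : ℝ) (hr : |r| * det2 u w ≤ ‖z‖ * D) : J * |r| ≤ ‖z‖ * D := by
    nlinarith [abs_nonneg r]
  rcases max_cases |x| |y| with ⟨hmax, -⟩ | ⟨hmax, -⟩ <;> rw [hmax] <;> apply bound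
  · calc |x| * det2 u w ≤ |det2 z w| := by
          rw [det2_smul_add_smul_left_self, abs_mul]
          exact mul_le_mul_of_nonneg_left (le_abs_self _) (abs_nonneg x)
      _ ≤ ‖z‖ * ‖w‖ := abs_det2_le z w
      _ ≤ ‖z‖ * D := by gcongr
  · calc |y| * det2 u w ≤ |det2 u z| := by
          rw [det2_smul_add_smul_right_self, abs_mul]
          exact mul_le_mul_of_nonneg_left (le_abs_self _) (abs_nonneg y)
      _ ≤ ‖u‖ * ‖z‖ := abs_det2_le u z
      _ ≤ ‖z‖ * D := by rw [mul_comm]; gcongr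

lemma corner_det2_le {P : Fin 4 → EuclideanSpace ℝ (Fin 2)} {J : ℝ}
    (hJ : J = ⨅ j : Fin 4, det2 (P (j + 1) - P j) (P (j - 1) - P j)) :
    J ≤ det2 (P 1 - P 0) (P 3 - P 0) ∧ J ≤ det2 (P 1 - P 0) (P 2 - P 1) ∧
      J ≤ det2 (P 2 - P 3) (P 3 - P 0) ∧ J ≤ det2 (P 2 - P 3) (P 2 - P 1) := by
  have corner (j : Fin 4) : J ≤ det2 (P (j + 1) - P j) (P (j - 1) - P j) :=
    hJ ▸ ciInf_le (Finite.bddBelow_range _) j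
  refine ⟨corner 0, (corner 1).trans_eq ?_, (corner 3).trans_eq ?_, (corner 2).trans_eq ?_⟩ <;>
    simp only [det2, PiLp.sub_apply, Fin.reduceAdd, Fin.reduceSub] <;> ring

lemma norm_sub_le_iSup_iSup {ι E : Type*} [Finite ι] [SeminormedAddCommGroup E] (P : ι → E)
    (i j : ι) : ‖P i - P j‖ ≤ ⨆ i, ⨆ j, ‖P i - P j‖ :=
  (le_ciSup (Finite.bddAbove_range _) j).trans
    (le_ciSup (f := fun i => ⨆ j, ‖P i - P j‖) (Finite.bddAbove_range _) i)

theorem quadrilateral_param_biLipschitz_general (P : Fin 4 → EuclideanSpace ℝ (Fin 2)) (J D : ℝ)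
    (hJ : J = ⨅ j : Fin 4, det2 (P (j + 1) - P j) (P (j - 1) - P j))
    (hD : D = ⨆ i : Fin 4, ⨆ j : Fin 4, ‖P i - P j‖)
    (v w : ℝ → EuclideanSpace ℝ (Fin 2))
    (hv : ∀ t : ℝ, v t = (1 - t) • (P 1 - P 0) + t • (P 2 - P 3))
    (hw : ∀ s : ℝ, w s = (1 - s) • (P 3 - P 0) + s • (P 2 - P 1))
    (Q : ℝ → ℝ → EuclideanSpace ℝ (Fin 2))
    (hQ : ∀ s t : ℝ, Q s t = P 0 + s • v 0 + t • w s) :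
    ∀ s ∈ Set.Icc (0 : ℝ) 1, ∀ t ∈ Set.Icc (0 : ℝ) 1,
      ∀ s' ∈ Set.Icc (0 : ℝ) 1, ∀ t' ∈ Set.Icc (0 : ℝ) 1,
        ‖Q s' t' - Q s t‖ ≤ D * (|s' - s| + |t' - t|) ∧
        (J / D) * max |s' - s| |t' - t| ≤ ‖Q s' t' - Q s t‖ := by
  intro s hs t _ s' _ t' ht'
  have hPD (i j : Fin 4) : ‖P i - P j‖ ≤ D := hD ▸ norm_sub_le_iSup_iSup P i j
  have hvD : ‖v t'‖ ≤ D := hv t' ▸ norm_sub_smul_add_smul_le ht' (hPD 1 0) (hPD 2 3)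
  have hwD : ‖w s‖ ≤ D := hw s ▸ norm_sub_smul_add_smul_le hs (hPD 3 0) (hPD 2 1)
  obtain ⟨h0, h1, h3, h2⟩ := corner_det2_le hJ
  have hJvw : J ≤ det2 (v t') (w s) := hv t' ▸ hw s ▸ le_det2_of_le_corners hs ht' h0 h1 h3 h2
  have hQ_sub : Q s' t' - Q s t = (s' - s) • v t' + (t' - t) • w s := by
    rw [hQ, hQ, hv, hv, hw, hw]
    module
  rw [hQ_sub]
  refine ⟨norm_smul_add_smul_le hvD hwD _ _, ?_⟩
  rw [div_mul_eq_mul_div]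
  exact div_le_of_le_mul₀ ((norm_nonneg _).trans hvD) (norm_nonneg _)
    (mul_max_abs_le_norm_smul_add_smul_mul hJvw hvD hwD _ _)

/-- Bi-Lipschitz parametrization of a strictly convex quadrilateral: with
`J := min_j det(P (j+1) − P j, P (j−1) − P j) > 0` (indices mod 4),
`v(t) = (1−t)(P₁−P₀) + t(P₂−P₃)`, `w(s) = (1−s)(P₃−P₀) + s(P₂−P₁)`,
`Q(s,t) = P₀ + s·v(0) + t·w(s)`, and `D` the largest distance between two vertices,
one has `|Q(s',t') − Q(s,t)| ≤ D(|s'−s| + |t'−t|)` and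
`|Q(s',t') − Q(s,t)| ≥ (J/D)·max(|s'−s|, |t'−t|)` for all `(s,t), (s',t') ∈ [0,1]²`. -/
theorem quadrilateral_param_biLipschitz (P : Fin 4 → EuclideanSpace ℝ (Fin 2)) (J D : ℝ)
    (hJ : J = ⨅ j : Fin 4, det2 (P (j + 1) - P j) (P (j - 1) - P j))
    (hJpos : 0 < J)
    (hD : D = ⨆ i : Fin 4, ⨆ j : Fin 4, ‖P i - P j‖)
    (v w : ℝ → EuclideanSpace ℝ (Fin 2))
    (hv : ∀ t : ℝ, v t = (1 - t) • (P 1 - P 0) + t • (P 2 - P 3))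
    (hw : ∀ s : ℝ, w s = (1 - s) • (P 3 - P 0) + s • (P 2 - P 1))
    (Q : ℝ → ℝ → EuclideanSpace ℝ (Fin 2))
    (hQ : ∀ s t : ℝ, Q s t = P 0 + s • v 0 + t • w s) :
    ∀ s ∈ Set.Icc (0 : ℝ) 1, ∀ t ∈ Set.Icc (0 : ℝ) 1,
      ∀ s' ∈ Set.Icc (0 : ℝ) 1, ∀ t' ∈ Set.Icc (0 : ℝ) 1,
        ‖Q s' t' - Q s t‖ ≤ D * (|s' - s| + |t' - t|) ∧
        (J / D) * max |s' - s| |t' - t| ≤ ‖Q s' t' - Q s t‖ :=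
  quadrilateral_param_biLipschitz_general P J D hJ hD v w hv hw Q hQ
end

section
/- For j ∈ {0,1,2,3} let P_j⁰ = (p_j⁰, 0) ∈ ℝ² × {0} and P_j¹ = (p_j¹, 1) ∈ ℝ² × {1} be the vertices of two quadrilaterals in the parallel planes {z=0} and {z=1} of ℝ³, and for u ∈ [0,1] set P_j^u := (1−u)·P_j⁰ + u·P_j¹. Assume there is J > 0 such that for every u ∈ [0,1] and every j (indices mod 4), the 2-dimensional determinant of the xy-projections satisfies det(proj(P_{j+1}^u − P_j^u), proj(P_{j−1}^u − P_j^u)) ≥ J. Define, for each u, v^u(t) := (1−t)·(P₁^u−P₀^u) + t·(P₂^u−P₃^u), w^u(s) := (1−s)·(P₃^u−P₀^u) + s·(P₂^u−P₁^u), Q^u(s,t) := P₀^u + s·v^u(0) + t·w^u(s), and B(s,t,u) := Q^u(s,t) = (1−u)·Q⁰(s,t) + u·Q¹(s,t). Let D := diam(B([0,1]³)) (Euclidean diameter of the image). Then for all (s,t,u), (s',t',u') ∈ [0,1]³: |B(s',t',u') − B(s,t,u)| ≤ D·(|s'−s| + |t'−t| + |u'−u|) and |B(s',t',u') − B(s,t,u)|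 ≥ (J/D²)·max{|s'−s|, |t'−t|, |u'−u|}. In particular B is a bi-Lipschitz map from the unit cube onto its image. -/
/-!
Write `Δ = B(s',t',u') − B(s,t,u)`. Since `B` is affine in each variable, moving one coordinate at a
time gives `Δ = (s'−s) V + (t'−t) W + (u'−u) E`, where `V`, `W`, `E` are differences of `B` between
opposite faces of the cube, so all three have length at most `D`; this is the upper bound.

`V` and `W` are horizontal while `E` has height `1`, so `det(V, W, E) = det(proj V, proj W)`,
which is a convex combination of the four corner determinants of a quadrilateral `Pᵘ`, hence `≥ J`.
By Cramer's rule each coefficient of `Δ` is a quotient `det(…Δ…) / det(V, W, E)`, and Hadamard's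
inequality bounds the numerator by `D² ‖Δ‖`.
-/

/-- The determinant of the xy-projections of two vectors in ℝ³:
`det(proj v, proj w) = v₁w₂ − v₂w₁`. -/
noncomputable def detxy (v w : EuclideanSpace ℝ (Fin 3)) : ℝ := v 0 * w 1 - v 1 * w 0

open Matrix

theorem EuclideanSpace.real_norm_sq_eq_dotProduct {ι : Type*} [Fintype ι]
    (x : EuclideanSpace ℝ ι) : ‖x‖ ^ 2 = x.ofLp ⬝ᵥ x.ofLp := by
  rw [← real_inner_self_eq_norm_sq, EuclideanSpace.inner_eq_star_dotProduct, star_trivial]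

theorem abs_det_le_norm_mul_norm_mul_norm (a b c : EuclideanSpace ℝ (Fin 3)) :
    |det (of ![a.ofLp, b.ofLp, c.ofLp])| ≤ ‖a‖ * ‖b‖ * ‖c‖ := by
  set x : EuclideanSpace ℝ (Fin 3) := WithLp.toLp 2 (b.ofLp ⨯₃ c.ofLp)
  have hx : ‖x‖ ^ 2 ≤ (‖b‖ * ‖c‖) ^ 2 := by
    simp only [mul_pow, EuclideanSpace.real_norm_sq_eq_dotProduct]
    rw [cross_dot_cross, dotProduct_comm c.ofLp b.ofLp]
    nlinarith [sq_nonneg (b.ofLp ⬝ᵥ c.ofLp)]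
  calc |det (of ![a.ofLp, b.ofLp, c.ofLp])| = |inner ℝ x a| := by
        rw [EuclideanSpace.inner_eq_star_dotProduct, star_trivial, triple_product_eq_det]; rfl
    _ ≤ ‖x‖ * ‖a‖ := abs_real_inner_le_norm x a
    _ ≤ ‖b‖ * ‖c‖ * ‖a‖ := by gcongr; exact (abs_le_of_sq_le_sq' hx (by positivity)).2
    _ = ‖a‖ * ‖b‖ * ‖c‖ := by ring

theorem det_fin_three_cramer {R : Type*} [CommRing R] {x v w e : Fin 3 → R} {α β γ : R}
    (hx : x = α • v + β • w + γ • e) :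
    det (of ![x, w, e]) = α * det (of ![v, w, e]) ∧ det (of ![v, x, e]) = β * det (of ![v, w, e]) ∧
      det (of ![v, w, x]) = γ * det (of ![v, w, e]) := by
  subst hx
  refine ⟨?_, ?_, ?_⟩ <;> simp [det_fin_three] <;> ring

theorem det_eq_detxy_mul_of_horizontal {v w : EuclideanSpace ℝ (Fin 3)} (hv : v 2 = 0)
    (hw : w 2 = 0) (e : EuclideanSpace ℝ (Fin 3)) :
    det (of ![v.ofLp, w.ofLp, e.ofLp]) = detxy v w * e 2 := by
  rw [det_fin_three]
  simp [detxy, hv, hw]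
  ring

theorem norm_smul_add_smul_add_smul_le {E : Type*} [SeminormedAddCommGroup E] [NormedSpace ℝ E]
    {v w e : E} {D : ℝ} (hv : ‖v‖ ≤ D) (hw : ‖w‖ ≤ D) (he : ‖e‖ ≤ D) (α β γ : ℝ) :
    ‖α • v + β • w + γ • e‖ ≤ D * (|α| + |β| + |γ|) := by
  calc ‖α • v + β • w + γ • e‖ ≤ ‖α • v‖ + ‖β • w‖ + ‖γ • e‖ := norm_add₃_le
    _ = |α| * ‖v‖ + |β| * ‖w‖ + |γ| * ‖e‖ := by simp only [norm_smul, Real.norm_eq_abs]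
    _ ≤ |α| * D + |β| * D + |γ| * D := by gcongr
    _ = D * (|α| + |β| + |γ|) := by ring

theorem mul_max_abs_le_sq_mul_norm {v w e : EuclideanSpace ℝ (Fin 3)} {J D : ℝ}
    (hJ : J ≤ det (of ![v.ofLp, w.ofLp, e.ofLp])) (hv : ‖v‖ ≤ D) (hw : ‖w‖ ≤ D) (he : ‖e‖ ≤ D)
    (α β γ : ℝ) :
    J * max (max |α| |β|) |γ| ≤ D ^ 2 * ‖α • v + β • w + γ • e‖ := by
  set x := α • v + β • w + γ • e
  have hD : 0 ≤ D := (norm_nonneg v).trans hv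
  have hDD {a b : EuclideanSpace ℝ (Fin 3)} (ha : ‖a‖ ≤ D) (hb : ‖b‖ ≤ D) : ‖a‖ * ‖b‖ ≤ D ^ 2 := by
    rw [sq]; exact mul_le_mul ha hb (norm_nonneg b) hD
  have hcoeff {c M : ℝ} (hM : M = c * det (of ![v.ofLp, w.ofLp, e.ofLp]))
      (hMx : |M| ≤ D ^ 2 * ‖x‖) : J * |c| ≤ D ^ 2 * ‖x‖ :=
    calc J * |c| ≤ |det (of ![v.ofLp, w.ofLp, e.ofLp])| * |c| := by
          gcongr; exact hJ.trans (le_abs_self _)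
      _ = |M| := by rw [hM, abs_mul, mul_comm]
      _ ≤ D ^ 2 * ‖x‖ := hMx
  obtain ⟨hα, hβ, hγ⟩ := det_fin_three_cramer (x := x.ofLp) (v := v.ofLp) (w := w.ofLp)
    (e := e.ofLp) (α := α) (β := β) (γ := γ) rfl
  have hαx : J * |α| ≤ D ^ 2 * ‖x‖ := hcoeff hα <| by
    have := abs_det_le_norm_mul_norm_mul_norm x w e
    nlinarith [hDD hw he, norm_nonneg x]
  have hβx : J * |β| ≤ D ^ 2 * ‖x‖ := hcoeff hβ <| by
    have := abs_det_le_norm_mul_norm_mul_norm v x e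
    nlinarith [hDD hv he, norm_nonneg x]
  have hγx : J * |γ| ≤ D ^ 2 * ‖x‖ := hcoeff hγ <| by
    have := abs_det_le_norm_mul_norm_mul_norm v w x
    nlinarith [hDD hv hw, norm_nonneg x]
  rcases max_choice (max |α| |β|) |γ| with h | h <;> rw [h]
  · rcases max_choice |α| |β| with h' | h' <;> rw [h'] <;> assumption
  · exact hγx

section MultiAffine

variable {k E : Type*} [CommRing k] [AddCommGroup E] [Module k E]

theorem sub_eq_smul_sub_of_lineMap {g : k → E} (hg : ∀ x, g x = AffineMap.lineMap (g 0) (g 1) x)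
    (a b : k) : g b - g a = (b - a) • (g 1 - g 0) := by
  rw [hg a, hg b, AffineMap.lineMap_apply_module', AffineMap.lineMap_apply_module']
  module

theorem sub_eq_of_lineMap_of_lineMap_of_lineMap {f : k → k → k → E}
    (hs : ∀ s t u, f s t u = AffineMap.lineMap (f 0 t u) (f 1 t u) s)
    (ht : ∀ s t u, f s t u = AffineMap.lineMap (f s 0 u) (f s 1 u) t)
    (hu : ∀ s t u, f s t u = AffineMap.lineMap (f s t 0) (f s t 1) u) (s t u s' t' u' : k) :
    f s' t' u' - f s t u = (s' - s) • (f 1 t' u' - f 0 t' u') +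
      (t' - t) • (f s 1 u' - f s 0 u') + (u' - u) • (f s t 1 - f s t 0) := by
  rw [← sub_eq_smul_sub_of_lineMap (g := (f · t' u')) (hs · t' u'),
    ← sub_eq_smul_sub_of_lineMap (g := (f s · u')) (ht s · u'),
    ← sub_eq_smul_sub_of_lineMap (g := (f s t ·)) (hu s t ·)]
  abel

end MultiAffine

theorem norm_sub_le_and_le_norm_sub_of_lineMap {f : ℝ → ℝ → ℝ → EuclideanSpace ℝ (Fin 3)}
    (hs : ∀ s t u, f s t u = AffineMap.lineMap (f 0 t u) (f 1 t u) s)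
    (ht : ∀ s t u, f s t u = AffineMap.lineMap (f s 0 u) (f s 1 u) t)
    (hu : ∀ s t u, f s t u = AffineMap.lineMap (f s t 0) (f s t 1) u) {J D s t u s' t' u' : ℝ}
    (hV : ‖f 1 t' u' - f 0 t' u'‖ ≤ D) (hW : ‖f s 1 u' - f s 0 u'‖ ≤ D)
    (hE : ‖f s t 1 - f s t 0‖ ≤ D)
    (hdet : J ≤ det (of ![(f 1 t' u' - f 0 t' u').ofLp, (f s 1 u' - f s 0 u').ofLp,
      (f s t 1 - f s t 0).ofLp])) :
    ‖f s' t' u' - f s t u‖ ≤ D * (|s' - s| + |t' - t| + |u' - u|) ∧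
      J / D ^ 2 * max (max |s' - s| |t' - t|) |u' - u| ≤ ‖f s' t' u' - f s t u‖ := by
  rw [sub_eq_of_lineMap_of_lineMap_of_lineMap hs ht hu]
  refine ⟨norm_smul_add_smul_add_smul_le hV hW hE _ _ _, ?_⟩
  rw [div_mul_eq_mul_div]
  exact div_le_of_le_mul₀ (sq_nonneg D) (norm_nonneg _)
    (mul_comm (D ^ 2) _ ▸ mul_max_abs_le_sq_mul_norm hdet hV hW hE _ _ _)

section BilinearPatch

variable {k E : Type*} [CommRing k] [AddCommGroup E] [Module k E]

/-- The paper's `Qᵘ(s, t)` when `P = Pᵘ`. -/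
def bilinearPatch (P : Fin 4 → E) (s t : k) : E :=
  P 0 + s • (P 1 - P 0) + t • ((1 - s) • (P 3 - P 0) + s • (P 2 - P 1))

theorem bilinearPatch_eq_lineMap_left (P : Fin 4 → E) (s t : k) :
    bilinearPatch P s t = AffineMap.lineMap (bilinearPatch P 0 t) (bilinearPatch P 1 t) s := by
  rw [AffineMap.lineMap_apply_module, bilinearPatch, bilinearPatch, bilinearPatch]
  module

theorem bilinearPatch_eq_lineMap_right (P : Fin 4 → E) (s t : k) :
    bilinearPatch P s t = AffineMap.lineMap (bilinearPatch P s 0) (bilinearPatch P s 1) t := by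
  rw [AffineMap.lineMap_apply_module, bilinearPatch, bilinearPatch, bilinearPatch]
  module

theorem bilinearPatch_lineMap (P Q : Fin 4 → E) (u s t : k) :
    bilinearPatch (fun j => AffineMap.lineMap (P j) (Q j) u) s t =
      AffineMap.lineMap (bilinearPatch P s t) (bilinearPatch Q s t) u := by
  simp only [bilinearPatch, AffineMap.lineMap_apply_module]
  module

theorem bilinearPatch_one_sub_zero_left (P : Fin 4 → E) (t : k) :
    bilinearPatch P 1 t - bilinearPatch P 0 t = (1 - t) • (P 1 - P 0) + t • (P 2 - P 3) := by
  simp only [bilinearPatch]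
  module

theorem bilinearPatch_one_sub_zero_right (P : Fin 4 → E) (s : k) :
    bilinearPatch P s 1 - bilinearPatch P s 0 = (1 - s) • (P 3 - P 0) + s • (P 2 - P 1) := by
  simp only [bilinearPatch]
  module

end BilinearPatch

theorem le_detxy_of_le_detxy_corners {P : Fin 4 → EuclideanSpace ℝ (Fin 3)} {J s t : ℝ}
    (hJ : ∀ j, J ≤ detxy (P (j + 1) - P j) (P (j - 1) - P j))
    (hs : s ∈ Set.Icc (0 : ℝ) 1) (ht : t ∈ Set.Icc (0 : ℝ) 1) :
    J ≤ detxy ((1 - t) • (P 1 - P 0) + t • (P 2 - P 3))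
      ((1 - s) • (P 3 - P 0) + s • (P 2 - P 1)) := by
  have h0 : J ≤ detxy (P 1 - P 0) (P 3 - P 0) := hJ 0
  have h1 : J ≤ detxy (P 2 - P 1) (P 0 - P 1) := hJ 1
  have h2 : J ≤ detxy (P 3 - P 2) (P 1 - P 2) := hJ 2
  have h3 : J ≤ detxy (P 0 - P 3) (P 2 - P 3) := hJ 3
  have hcorners : detxy ((1 - t) • (P 1 - P 0) + t • (P 2 - P 3))
      ((1 - s) • (P 3 - P 0) + s • (P 2 - P 1)) =
      (1 - t) * (1 - s) * detxy (P 1 - P 0) (P 3 - P 0) +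
      (1 - t) * s * detxy (P 2 - P 1) (P 0 - P 1) + t * s * detxy (P 3 - P 2) (P 1 - P 2) +
      t * (1 - s) * detxy (P 0 - P 3) (P 2 - P 3) := by
    simp only [detxy, PiLp.add_apply, PiLp.smul_apply, PiLp.sub_apply, smul_eq_mul]
    ring
  obtain ⟨hs0, hs1⟩ := hs
  obtain ⟨ht0, ht1⟩ := ht
  rw [hcorners]
  nlinarith [mul_nonneg (mul_nonneg (sub_nonneg.2 ht1) (sub_nonneg.2 hs1)) (sub_nonneg.2 h0),
    mul_nonneg (mul_nonneg (sub_nonneg.2 ht1) hs0) (sub_nonneg.2 h1),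
    mul_nonneg (mul_nonneg ht0 hs0) (sub_nonneg.2 h2),
    mul_nonneg (mul_nonneg ht0 (sub_nonneg.2 hs1)) (sub_nonneg.2 h3)]

theorem norm_sub_le_diam_image_unitCube {E : Type*} [SeminormedAddCommGroup E]
    {f : ℝ → ℝ → ℝ → E} (hf : Continuous fun p : ℝ × ℝ × ℝ => f p.1 p.2.1 p.2.2)
    {s t u s' t' u' : ℝ} (hs : s ∈ Set.Icc (0 : ℝ) 1) (ht : t ∈ Set.Icc (0 : ℝ) 1)
    (hu : u ∈ Set.Icc (0 : ℝ) 1) (hs' : s' ∈ Set.Icc (0 : ℝ) 1) (ht' : t' ∈ Set.Icc (0 : ℝ) 1)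
    (hu' : u' ∈ Set.Icc (0 : ℝ) 1) :
    ‖f s t u - f s' t' u'‖ ≤ Metric.diam {x : E | ∃ s ∈ Set.Icc (0 : ℝ) 1,
      ∃ t ∈ Set.Icc (0 : ℝ) 1, ∃ u ∈ Set.Icc (0 : ℝ) 1, x = f s t u} := by
  have himage : {x : E | ∃ s ∈ Set.Icc (0 : ℝ) 1, ∃ t ∈ Set.Icc (0 : ℝ) 1,
      ∃ u ∈ Set.Icc (0 : ℝ) 1, x = f s t u} =
      (fun p : ℝ × ℝ × ℝ => f p.1 p.2.1 p.2.2) '' (Set.Icc 0 1 ×ˢ Set.Icc 0 1 ×ˢ Set.Icc 0 1) := by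
    ext x
    constructor
    · rintro ⟨a, ha, b, hb, c, hc, rfl⟩
      exact ⟨(a, b, c), ⟨ha, hb, hc⟩, rfl⟩
    · rintro ⟨⟨a, b, c⟩, ⟨ha, hb, hc⟩, rfl⟩
      exact ⟨a, ha, b, hb, c, hc, rfl⟩
  rw [← dist_eq_norm]
  refine Metric.dist_le_diam_of_mem ?_ ⟨s, hs, t, ht, u, hu, rfl⟩ ⟨s', hs', t', ht', u', hu', rfl⟩
  rw [himage]
  exact ((isCompact_Icc.prod (isCompact_Icc.prod isCompact_Icc)).image hf).isBounded

theorem prism_param_biLipschitz_general (P0 P1 : Fin 4 → EuclideanSpace ℝ (Fin 3))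
    (hP0 : ∀ j, P0 j 2 = 0) (hP1 : ∀ j, P1 j 2 = 1)
    (Pu : ℝ → Fin 4 → EuclideanSpace ℝ (Fin 3))
    (hPu : ∀ (u : ℝ) (j : Fin 4), Pu u j = (1 - u) • P0 j + u • P1 j)
    (J : ℝ)
    (hJ : ∀ u ∈ Set.Icc (0 : ℝ) 1, ∀ j : Fin 4,
      J ≤ detxy (Pu u (j + 1) - Pu u j) (Pu u (j - 1) - Pu u j))
    (vu wu : ℝ → ℝ → EuclideanSpace ℝ (Fin 3))
    (hvu : ∀ u t : ℝ, vu u t = (1 - t) • (Pu u 1 - Pu u 0) + t • (Pu u 2 - Pu u 3))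
    (hwu : ∀ u s : ℝ, wu u s = (1 - s) • (Pu u 3 - Pu u 0) + s • (Pu u 2 - Pu u 1))
    (Qu : ℝ → ℝ → ℝ → EuclideanSpace ℝ (Fin 3))
    (hQu : ∀ u s t : ℝ, Qu u s t = Pu u 0 + s • vu u 0 + t • wu u s)
    (B : ℝ → ℝ → ℝ → EuclideanSpace ℝ (Fin 3))
    (hB : ∀ s t u : ℝ, B s t u = Qu u s t)
    (D : ℝ)
    (hD : D = Metric.diam {x : EuclideanSpace ℝ (Fin 3) |
      ∃ s ∈ Set.Icc (0 : ℝ) 1, ∃ t ∈ Set.Icc (0 : ℝ) 1, ∃ u ∈ Set.Icc (0 : ℝ) 1,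
        x = B s t u}) :
    ∀ s ∈ Set.Icc (0 : ℝ) 1, ∀ t ∈ Set.Icc (0 : ℝ) 1, ∀ u ∈ Set.Icc (0 : ℝ) 1,
      ∀ s' ∈ Set.Icc (0 : ℝ) 1, ∀ t' ∈ Set.Icc (0 : ℝ) 1, ∀ u' ∈ Set.Icc (0 : ℝ) 1,
        ‖B s' t' u' - B s t u‖ ≤ D * (|s' - s| + |t' - t| + |u' - u|) ∧
        (J / D ^ 2) * max (max |s' - s| |t' - t|) |u' - u| ≤ ‖B s' t' u' - B s t u‖ := by
  intro s hs t ht u hu s' hs' t' ht' u' hu'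
  have hPu' : ∀ u, Pu u = fun j => AffineMap.lineMap (P0 j) (P1 j) u := fun u =>
    funext fun j => by rw [hPu, AffineMap.lineMap_apply_module]
  have hQ : ∀ s t u, B s t u = bilinearPatch (Pu u) s t := by
    intro s t u; rw [hB, hQu, hvu, hwu, bilinearPatch]; module
  have hBs : ∀ s t u, B s t u = AffineMap.lineMap (B 0 t u) (B 1 t u) s := by
    simp only [hQ]; exact fun s t u => bilinearPatch_eq_lineMap_left _ s t
  have hBt : ∀ s t u, B s t u = AffineMap.lineMap (B s 0 u) (B s 1 u) t := by
    simp only [hQ]; exact fun s t u => bilinearPatch_eq_lineMap_right _ s t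
  have hBu : ∀ s t u, B s t u = AffineMap.lineMap (B s t 0) (B s t 1) u := by
    simp only [hQ, hPu', bilinearPatch_lineMap, AffineMap.lineMap_apply_zero,
      AffineMap.lineMap_apply_one, implies_true]
  have hz : ∀ s t u, B s t u 2 = u := by
    intro s t u
    simp only [hQ, bilinearPatch, hPu, PiLp.add_apply, PiLp.smul_apply, PiLp.sub_apply,
      smul_eq_mul, hP0, hP1]
    ring
  have hdiam {a b c a' b' c'} (ha : a ∈ Set.Icc (0 : ℝ) 1) (hb : b ∈ Set.Icc (0 : ℝ) 1)
      (hc : c ∈ Set.Icc (0 : ℝ) 1) (ha' : a' ∈ Set.Icc (0 : ℝ) 1) (hb' : b' ∈ Set.Icc (0 : ℝ) 1)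
      (hc' : c' ∈ Set.Icc (0 : ℝ) 1) : ‖B a b c - B a' b' c'‖ ≤ D :=
    hD ▸ norm_sub_le_diam_image_unitCube (by simp only [hQ, bilinearPatch, hPu]; fun_prop)
      ha hb hc ha' hb' hc'
  have h0 : (0 : ℝ) ∈ Set.Icc (0 : ℝ) 1 := Set.left_mem_Icc.2 zero_le_one
  have h1 : (1 : ℝ) ∈ Set.Icc (0 : ℝ) 1 := Set.right_mem_Icc.2 zero_le_one
  refine norm_sub_le_and_le_norm_sub_of_lineMap hBs hBt hBu (hdiam h1 ht' hu' h0 ht' hu')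
    (hdiam hs h1 hu' hs h0 hu') (hdiam hs ht h1 hs ht h0) ?_
  rw [det_eq_detxy_mul_of_horizontal (by simp [hz]) (by simp [hz])]
  simp only [PiLp.sub_apply, hz, sub_zero, mul_one]
  simp only [hQ, bilinearPatch_one_sub_zero_left, bilinearPatch_one_sub_zero_right]
  exact le_detxy_of_le_detxy_corners (hJ u' hu') hs ht'

/-- Bi-Lipschitz parametrization of the region between two strictly convex
quadrilaterals lying in the parallel planes `{z = 0}` and `{z = 1}` of ℝ³.
With `Pᵘⱼ := (1−u)·P⁰ⱼ + u·P¹ⱼ`, assuming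
`det(proj(Pᵘ_{j+1} − Pᵘⱼ), proj(Pᵘ_{j−1} − Pᵘⱼ)) ≥ J > 0` for all `u ∈ [0,1]`
and all `j` (mod 4), the map `B(s,t,u) := Qᵘ(s,t)` with
`Qᵘ(s,t) = Pᵘ₀ + s·vᵘ(0) + t·wᵘ(s)` satisfies
`|B(s',t',u') − B(s,t,u)| ≤ D(|s'−s| + |t'−t| + |u'−u|)` and
`|B(s',t',u') − B(s,t,u)| ≥ (J/D²)·max(|s'−s|, |t'−t|, |u'−u|)`,
where `D` is the Euclidean diameter of the image `B([0,1]³)`. -/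
theorem prism_param_biLipschitz (P0 P1 : Fin 4 → EuclideanSpace ℝ (Fin 3))
    (hP0 : ∀ j, P0 j 2 = 0) (hP1 : ∀ j, P1 j 2 = 1)
    (Pu : ℝ → Fin 4 → EuclideanSpace ℝ (Fin 3))
    (hPu : ∀ (u : ℝ) (j : Fin 4), Pu u j = (1 - u) • P0 j + u • P1 j)
    (J : ℝ) (hJpos : 0 < J)
    (hJ : ∀ u ∈ Set.Icc (0 : ℝ) 1, ∀ j : Fin 4,
      J ≤ detxy (Pu u (j + 1) - Pu u j) (Pu u (j - 1) - Pu u j))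
    (vu wu : ℝ → ℝ → EuclideanSpace ℝ (Fin 3))
    (hvu : ∀ u t : ℝ, vu u t = (1 - t) • (Pu u 1 - Pu u 0) + t • (Pu u 2 - Pu u 3))
    (hwu : ∀ u s : ℝ, wu u s = (1 - s) • (Pu u 3 - Pu u 0) + s • (Pu u 2 - Pu u 1))
    (Qu : ℝ → ℝ → ℝ → EuclideanSpace ℝ (Fin 3))
    (hQu : ∀ u s t : ℝ, Qu u s t = Pu u 0 + s • vu u 0 + t • wu u s)
    (B : ℝ → ℝ → ℝ → EuclideanSpace ℝ (Fin 3))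
    (hB : ∀ s t u : ℝ, B s t u = Qu u s t)
    (D : ℝ)
    (hD : D = Metric.diam {x : EuclideanSpace ℝ (Fin 3) |
      ∃ s ∈ Set.Icc (0 : ℝ) 1, ∃ t ∈ Set.Icc (0 : ℝ) 1, ∃ u ∈ Set.Icc (0 : ℝ) 1,
        x = B s t u}) :
    ∀ s ∈ Set.Icc (0 : ℝ) 1, ∀ t ∈ Set.Icc (0 : ℝ) 1, ∀ u ∈ Set.Icc (0 : ℝ) 1,
      ∀ s' ∈ Set.Icc (0 : ℝ) 1, ∀ t' ∈ Set.Icc (0 : ℝ) 1, ∀ u' ∈ Set.Icc (0 : ℝ) 1,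
        ‖B s' t' u' - B s t u‖ ≤ D * (|s' - s| + |t' - t| + |u' - u|) ∧
        (J / D ^ 2) * max (max |s' - s| |t' - t|) |u' - u| ≤ ‖B s' t' u' - B s t u‖ :=
  prism_param_biLipschitz_general P0 P1 hP0 hP1 Pu hPu J hJ vu wu hvu hwu Qu hQu B hB D hD
end

section
/- (Alexander trick, bi-Lipschitz version.) Let φ be a homeomorphism of the closed unit disk D̄ = {z ∈ ℂ : |z| ≤ 1} onto itself that is L-bi-Lipschitz for some L ≥ 1 and satisfies φ(z) = z for all |z| = 1. Define φ̄ : D̄ × [0,1] → D̄ × [0,1] by φ̄(z,t) := (t·φ(z/t), t) if 0 ≤ |z| ≤ t (with φ̄(0,0) := (0,0)) and φ̄(z,t) := (z,t) if t ≤ |z| ≤ 1. Then φ̄ is a bijection of D̄ × [0,1] with φ̄ restricted to D̄ × {1} equal to φ and φ̄ equal to the identity on the rest of ∂(D̄ × [0,1]), and φ̄ is L'-bi-Lipschitz for some constant L' depending only on L. -/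
/-!
Write `ψ` for `φ` extended by the identity outside the unit ball. For `t > 0` the `t`-slice
`z ↦ t ψ(z / t)` of `φ̄` is a rescaling of `ψ`, so every slice is bi-Lipschitz with the constant
of `ψ`. That constant comes from comparing a point `u` of the ball with its radial projection onto
the sphere, where `φ` is the identity: this gives `‖φ u - u‖ ≤ (L + 1)(1 - ‖u‖)` and
`1 - ‖u‖ ≤ L (1 - ‖φ u‖)`. The first estimate also shows that the slices move by at most
`(L + 1)|s - t|` as `t` varies, and a map `(x, t) ↦ (F t x, t)` whose slices are uniformly
bi-Lipschitz and depend Lipschitz-continuously on `t` is bi-Lipschitz for the maximum metric.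
-/

open Set Metric

section BiLipschitz

variable {X Y T : Type*} [PseudoMetricSpace X] [PseudoMetricSpace Y] [PseudoMetricSpace T]

def BiLipschitzOn (K : ℝ) (f : X → Y) (s : Set X) : Prop :=
  ∀ x ∈ s, ∀ y ∈ s, dist x y ≤ K * dist (f x) (f y) ∧ dist (f x) (f y) ≤ K * dist x y

theorem BiLipschitzOn.mono {K : ℝ} {f : X → Y} {s t : Set X} (hf : BiLipschitzOn K f t)
    (hst : s ⊆ t) : BiLipschitzOn K f s := fun x hx y hy => hf x (hst hx) y (hst hy)

theorem BiLipschitzOn.fibrewise {K : ℝ} {F : T → X → Y} {S : Set X} {I : Set T} (hK : 1 ≤ K)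
    (hF : ∀ t ∈ I, BiLipschitzOn K (F t) S)
    (htime : ∀ x ∈ S, ∀ s ∈ I, ∀ t ∈ I, dist (F s x) (F t x) ≤ K * dist s t) :
    BiLipschitzOn (K * (K + 1)) (fun p : X × T => (F p.2 p.1, p.2)) (S ×ˢ I) := by
  rintro ⟨x, s⟩ ⟨hx, hs⟩ ⟨y, t⟩ ⟨hy, ht⟩
  simp only [Prod.dist_eq]
  obtain ⟨hlower, hupper⟩ := hF t ht x hx y hy
  have hmove := htime x hx s hs t ht
  have hK₀ : 0 ≤ K := zero_le_one.trans hK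
  have hKK : 1 ≤ K * (K + 1) := by nlinarith
  set e := dist s t
  constructor
  · set M := max (dist (F s x) (F t y)) e
    refine max_le ?_ (le_max_right _ _ |>.trans (le_mul_of_one_le_left (by positivity) hKK))
    calc dist x y ≤ K * dist (F t x) (F t y) := hlower
      _ ≤ K * (dist (F s x) (F t x) + dist (F s x) (F t y)) := by
        gcongr; exact dist_comm (F t x) (F s x) ▸ dist_triangle _ _ _
      _ ≤ K * (K * M + M) := by
        gcongr
        · exact hmove.trans (by gcongr; exact le_max_right _ _)
        · exact le_max_left _ _
      _ = K * (K + 1) * M := by ring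
  · set M := max (dist x y) e
    refine max_le ?_ (le_max_right _ _ |>.trans (le_mul_of_one_le_left (by positivity) hKK))
    calc dist (F s x) (F t y) ≤ dist (F s x) (F t x) + dist (F t x) (F t y) := dist_triangle _ _ _
      _ ≤ K * M + K * M := by
        gcongr
        · exact hmove.trans (by gcongr; exact le_max_right _ _)
        · exact hupper.trans (by gcongr; exact le_max_left _ _)
      _ ≤ K * (K + 1) * M := by
        have hM : 0 ≤ M := dist_nonneg.trans (le_max_right _ _)
        nlinarith [mul_nonneg (mul_nonneg hK₀ hM) (sub_nonneg.2 hK)]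

end BiLipschitz

theorem BiLipschitzOn.injOn {X Y : Type*} [MetricSpace X] [PseudoMetricSpace Y] {K : ℝ}
    {f : X → Y} {s : Set X} (hf : BiLipschitzOn K f s) : InjOn f s := fun x hx y hy hxy =>
  dist_le_zero.1 <| by simpa [hxy] using (hf x hx y hy).1

theorem bijOn_fibrewise {X Y T : Type*} {F : T → X → Y} {S : Set X} {S' : Set Y} {I : Set T}
    (hF : ∀ t ∈ I, BijOn (F t) S S') :
    BijOn (fun p : X × T => (F p.2 p.1, p.2)) (S ×ˢ I) (S' ×ˢ I) := by
  refine ⟨fun p hp => ⟨(hF p.2 hp.2).mapsTo hp.1, hp.2⟩, ?_, ?_⟩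
  · rintro ⟨x, s⟩ ⟨hx, hs⟩ ⟨y, t⟩ ⟨hy, -⟩ h
    obtain ⟨hxy, rfl⟩ := Prod.ext_iff.1 h
    exact Prod.ext ((hF s hs).injOn hx hy hxy) rfl
  · rintro ⟨y, t⟩ ⟨hy, ht⟩
    obtain ⟨x, hx, rfl⟩ := (hF t ht).surjOn hy
    exact ⟨(x, t), ⟨hx, ht⟩, rfl⟩

section NormedSpace

variable {E : Type*} [NormedAddCommGroup E] [NormedSpace ℝ E]

theorem BiLipschitzOn.conj_smul {K t : ℝ} {f : E → E} (hf : BiLipschitzOn K f univ) (ht : t ≠ 0) :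
    BiLipschitzOn K (fun z => t • f (t⁻¹ • z)) univ := by
  intro z _ w _
  obtain ⟨hlower, hupper⟩ := hf (t⁻¹ • z) trivial (t⁻¹ • w) trivial
  have hzw : dist z w = ‖t‖ * dist (t⁻¹ • z) (t⁻¹ • w) := by
    rw [dist_smul₀, ← mul_assoc, norm_inv, mul_inv_cancel₀ (norm_ne_zero_iff.2 ht), one_mul]
  rw [dist_smul₀, hzw]
  constructor
  · calc ‖t‖ * dist (t⁻¹ • z) (t⁻¹ • w) ≤ ‖t‖ * (K * dist (f (t⁻¹ • z)) (f (t⁻¹ • w))) := by gcongr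
      _ = K * (‖t‖ * dist (f (t⁻¹ • z)) (f (t⁻¹ • w))) := by ring
  · calc ‖t‖ * dist (f (t⁻¹ • z)) (f (t⁻¹ • w)) ≤ ‖t‖ * (K * dist (t⁻¹ • z) (t⁻¹ • w)) := by gcongr
      _ = K * (‖t‖ * dist (t⁻¹ • z) (t⁻¹ • w)) := by ring

theorem norm_inv_smul_le_one_iff {t : ℝ} (ht : 0 < t) (z : E) : ‖t⁻¹ • z‖ ≤ 1 ↔ ‖z‖ ≤ t := by
  rw [norm_smul, norm_inv, Real.norm_of_nonneg ht.le, inv_mul_le_iff₀ ht, mul_one]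

theorem exists_norm_eq_one_norm_sub_eq [Nontrivial E] {u : E} (hu : ‖u‖ ≤ 1) :
    ∃ v : E, ‖v‖ = 1 ∧ ‖u - v‖ = 1 - ‖u‖ := by
  rcases eq_or_ne u 0 with rfl | hu₀
  · obtain ⟨v, hv⟩ := exists_norm_eq E zero_le_one
    exact ⟨v, hv, by simp [hv]⟩
  · have hpos : 0 < ‖u‖ := norm_pos_iff.2 hu₀
    refine ⟨‖u‖⁻¹ • u, norm_smul_inv_norm hu₀, ?_⟩
    have hsub : u - ‖u‖⁻¹ • u = -((‖u‖⁻¹ - 1) • u) := by rw [sub_smul, one_smul]; abel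
    have hcoeff : 0 ≤ ‖u‖⁻¹ - 1 := sub_nonneg.2 (one_le_inv_iff₀.2 ⟨hpos, hu⟩)
    rw [hsub, norm_neg, norm_smul, Real.norm_of_nonneg hcoeff, sub_mul, inv_mul_cancel₀ hpos.ne',
      one_mul]

end NormedSpace

section AlexanderTrick

variable {E : Type*} [NormedAddCommGroup E] [NormedSpace ℝ E] {L : ℝ} {φ : E → E}

structure IsBiLipschitzFixingSphere (L : ℝ) (φ : E → E) : Prop where
  mapsTo : MapsTo φ (closedBall 0 1) (closedBall 0 1)
  biLipschitzOn : BiLipschitzOn L φ (closedBall 0 1)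
  map_eq_self : ∀ z : E, ‖z‖ = 1 → φ z = z

noncomputable def extendById (φ : E → E) (u : E) : E := if ‖u‖ ≤ 1 then φ u else u

/-- The first coordinate of `φ̄ (z, t)`; for `t = 0` it is the identity. -/
noncomputable def alexanderSlice (φ : E → E) (t : ℝ) (z : E) : E :=
  if ‖z‖ ≤ t then t • φ (t⁻¹ • z) else z

theorem alexanderSlice_zero (φ : E → E) : alexanderSlice φ 0 = id := by
  funext z
  by_cases h : ‖z‖ ≤ 0
  · simp [alexanderSlice, norm_le_zero_iff.1 h]
  · simp [alexanderSlice, h]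

theorem alexanderSlice_eq_smul_extendById {t : ℝ} (ht : 0 < t) (z : E) :
    alexanderSlice φ t z = t • extendById φ (t⁻¹ • z) := by
  by_cases h : ‖z‖ ≤ t
  · simp [alexanderSlice, extendById, h, norm_inv_smul_le_one_iff ht]
  · simp [alexanderSlice, extendById, h, norm_inv_smul_le_one_iff ht, smul_inv_smul₀ ht.ne']

theorem mapsTo_alexanderSlice (hφ : MapsTo φ (closedBall 0 1) (closedBall 0 1)) {t : ℝ}
    (ht : t ∈ Icc (0 : ℝ) 1) : MapsTo (alexanderSlice φ t) (closedBall 0 1) (closedBall 0 1) := by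
  intro z hz
  rcases ht.1.eq_or_lt with rfl | ht₀
  · rwa [alexanderSlice_zero]
  rw [alexanderSlice]
  split_ifs with hzt
  · have hφz := mem_closedBall_zero_iff.1
      (hφ (mem_closedBall_zero_iff.2 ((norm_inv_smul_le_one_iff ht₀ z).2 hzt)))
    rw [mem_closedBall_zero_iff, norm_smul, Real.norm_of_nonneg ht₀.le]
    nlinarith [ht.2]
  · exact hz

namespace IsBiLipschitzFixingSphere

theorem norm_map_sub_self_le [Nontrivial E] (hφ : IsBiLipschitzFixingSphere L φ) {u : E}
    (hu : ‖u‖ ≤ 1) :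
    ‖φ u - u‖ ≤ (L + 1) * (1 - ‖u‖) := by
  obtain ⟨v, hv, huv⟩ := exists_norm_eq_one_norm_sub_eq hu
  have hlip := (hφ.biLipschitzOn u (mem_closedBall_zero_iff.2 hu) v
    (mem_closedBall_zero_iff.2 hv.le)).2
  rw [dist_eq_norm, dist_eq_norm, hφ.map_eq_self v hv, huv] at hlip
  calc ‖φ u - u‖ ≤ ‖φ u - v‖ + ‖v - u‖ := norm_sub_le_norm_sub_add_norm_sub _ _ _
    _ ≤ (L + 1) * (1 - ‖u‖) := by rw [norm_sub_rev v, huv]; linarith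

theorem one_sub_norm_le [Nontrivial E] (hφ : IsBiLipschitzFixingSphere L φ) {u : E}
    (hu : ‖u‖ ≤ 1) :
    1 - ‖u‖ ≤ L * (1 - ‖φ u‖) := by
  obtain ⟨v, hv, huv⟩ := exists_norm_eq_one_norm_sub_eq (mem_closedBall_zero_iff.1
    (hφ.mapsTo (mem_closedBall_zero_iff.2 hu)))
  have hlip := (hφ.biLipschitzOn u (mem_closedBall_zero_iff.2 hu) v
    (mem_closedBall_zero_iff.2 hv.le)).1
  rw [dist_eq_norm, dist_eq_norm, hφ.map_eq_self v hv, huv] at hlip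
  linarith [norm_sub_norm_le v u, norm_sub_rev v u]

theorem dist_map_le_of_norm_le_one_le [Nontrivial E] (hφ : IsBiLipschitzFixingSphere L φ)
    (hL : 0 ≤ L) {u v : E} (hu : ‖u‖ ≤ 1) (hv : 1 ≤ ‖v‖) :
    dist (φ u) v ≤ (L + 2) * dist u v := by
  have hgap : 1 - ‖u‖ ≤ dist u v := by
    rw [dist_comm, dist_eq_norm]; linarith [norm_sub_norm_le v u]
  calc dist (φ u) v ≤ dist (φ u) u + dist u v := dist_triangle _ _ _
    _ ≤ (L + 1) * dist u v + dist u v := by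
      rw [dist_eq_norm]
      gcongr
      exact (hφ.norm_map_sub_self_le hu).trans (by gcongr)
    _ = (L + 2) * dist u v := by ring

theorem dist_le_of_norm_le_one_le [Nontrivial E] (hφ : IsBiLipschitzFixingSphere L φ)
    (hL : 0 ≤ L) {u v : E} (hu : ‖u‖ ≤ 1) (hv : 1 ≤ ‖v‖) :
    dist u v ≤ (L ^ 2 + L + 1) * dist (φ u) v := by
  have hgap : 1 - ‖φ u‖ ≤ dist (φ u) v := by
    rw [dist_comm, dist_eq_norm]; linarith [norm_sub_norm_le v (φ u)]
  calc dist u v ≤ dist u (φ u) + dist (φ u) v := dist_triangle _ _ _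
    _ ≤ (L + 1) * (L * dist (φ u) v) + dist (φ u) v := by
      rw [dist_comm, dist_eq_norm]
      gcongr
      calc ‖φ u - u‖ ≤ (L + 1) * (1 - ‖u‖) := hφ.norm_map_sub_self_le hu
        _ ≤ (L + 1) * (L * (1 - ‖φ u‖)) := by gcongr; exact hφ.one_sub_norm_le hu
        _ ≤ (L + 1) * (L * dist (φ u) v) := by gcongr
    _ = (L ^ 2 + L + 1) * dist (φ u) v := by ring

theorem biLipschitzOn_extendById [Nontrivial E] (hφ : IsBiLipschitzFixingSphere L φ)
    (hL : 1 ≤ L) : BiLipschitzOn (L ^ 2 + L + 1) (extendById φ) univ := by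
  have hL₀ : 0 ≤ L := zero_le_one.trans hL
  have hcross : ∀ u v : E, ‖u‖ ≤ 1 → 1 < ‖v‖ →
      dist u v ≤ (L ^ 2 + L + 1) * dist (φ u) v ∧ dist (φ u) v ≤ (L ^ 2 + L + 1) * dist u v :=
    fun u v hu hv => ⟨hφ.dist_le_of_norm_le_one_le hL₀ hu hv.le,
      (hφ.dist_map_le_of_norm_le_one_le hL₀ hu hv.le).trans
        (mul_le_mul_of_nonneg_right (by nlinarith) dist_nonneg)⟩
  intro u _ v _
  unfold extendById
  rcases le_or_gt ‖u‖ 1 with hu | hu <;> rcases le_or_gt ‖v‖ 1 with hv | hv <;>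
    simp only [hu, hv, if_true, if_false, not_le.2]
  · obtain ⟨hlower, hupper⟩ :=
      hφ.biLipschitzOn u (mem_closedBall_zero_iff.2 hu) v (mem_closedBall_zero_iff.2 hv)
    exact ⟨hlower.trans (by gcongr; nlinarith), hupper.trans (by gcongr; nlinarith)⟩
  · exact hcross u v hu hv
  · rw [dist_comm u v, dist_comm u (φ v)]
    exact hcross v u hv hu
  · exact ⟨le_mul_of_one_le_left dist_nonneg (by nlinarith),
      le_mul_of_one_le_left dist_nonneg (by nlinarith)⟩

theorem alexanderSlice_of_le (hφ : IsBiLipschitzFixingSphere L φ)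
    {t : ℝ} {z : E} (ht : 0 ≤ t) (h : t ≤ ‖z‖) : alexanderSlice φ t z = z := by
  rcases ht.eq_or_lt with rfl | ht
  · rw [alexanderSlice_zero, id]
  by_cases hzt : ‖z‖ ≤ t
  · have hnorm : ‖t⁻¹ • z‖ = 1 := by
      rw [norm_smul, norm_inv, Real.norm_of_nonneg ht.le, le_antisymm hzt h, inv_mul_cancel₀ ht.ne']
    rw [alexanderSlice, if_pos hzt, hφ.map_eq_self _ hnorm, smul_inv_smul₀ ht.ne']
  · rw [alexanderSlice, if_neg hzt]

theorem biLipschitzOn_alexanderSlice [Nontrivial E]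
    (hφ : IsBiLipschitzFixingSphere L φ) (hL : 1 ≤ L) {t : ℝ} (ht : 0 ≤ t) :
    BiLipschitzOn (L ^ 2 + L + 1) (alexanderSlice φ t) univ := by
  rcases ht.eq_or_lt with rfl | ht
  · rw [alexanderSlice_zero]
    intro z _ w _
    exact ⟨le_mul_of_one_le_left dist_nonneg (by nlinarith),
      le_mul_of_one_le_left dist_nonneg (by nlinarith)⟩
  · rw [funext (alexanderSlice_eq_smul_extendById ht)]
    exact (hφ.biLipschitzOn_extendById hL).conj_smul ht.ne'

theorem dist_alexanderSlice_self_le [Nontrivial E]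
    (hφ : IsBiLipschitzFixingSphere L φ) {t : ℝ} {z : E} (ht : 0 ≤ t) (h : ‖z‖ ≤ t) :
    dist (alexanderSlice φ t z) z ≤ (L + 1) * (t - ‖z‖) := by
  rcases ht.eq_or_lt with rfl | ht
  · simp [alexanderSlice_zero, le_antisymm h (norm_nonneg z)]
  have hu : ‖t⁻¹ • z‖ ≤ 1 := (norm_inv_smul_le_one_iff ht z).2 h
  calc dist (alexanderSlice φ t z) z = dist (t • φ (t⁻¹ • z)) (t • t⁻¹ • z) := by
        rw [alexanderSlice, if_pos h, smul_inv_smul₀ ht.ne']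
    _ = t * ‖φ (t⁻¹ • z) - t⁻¹ • z‖ := by
        rw [dist_smul₀, Real.norm_of_nonneg ht.le, dist_eq_norm]
    _ ≤ t * ((L + 1) * (1 - ‖t⁻¹ • z‖)) := by gcongr; exact hφ.norm_map_sub_self_le hu
    _ = (L + 1) * (t - ‖z‖) := by
        rw [norm_smul, norm_inv, Real.norm_of_nonneg ht.le]
        field_simp

theorem dist_alexanderSlice_le_of_le [Nontrivial E]
    (hφ : IsBiLipschitzFixingSphere L φ) (hL : 0 ≤ L) {s t : ℝ} (hs : 0 ≤ s) (hst : s ≤ t)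
    (z : E) : dist (alexanderSlice φ s z) (alexanderSlice φ t z) ≤ (L + 1) * (t - s) := by
  rcases le_or_gt s ‖z‖ with hsz | hzs
  · rw [hφ.alexanderSlice_of_le hs hsz, dist_comm]
    rcases le_or_gt ‖z‖ t with hzt | htz
    · exact (hφ.dist_alexanderSlice_self_le (hs.trans hst) hzt).trans (by gcongr)
    · rw [hφ.alexanderSlice_of_le (hs.trans hst) htz.le, dist_self]
      exact mul_nonneg (by linarith) (by linarith)
  have hs₀ : 0 < s := (norm_nonneg z).trans_lt hzs
  have ht₀ : 0 < t := hs₀.trans_le hst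
  have hzt : ‖z‖ ≤ t := hzs.le.trans hst
  have ha := (norm_inv_smul_le_one_iff hs₀ z).2 hzs.le
  have hb := (norm_inv_smul_le_one_iff ht₀ z).2 hzt
  have hφa : ‖φ (s⁻¹ • z)‖ ≤ 1 :=
    mem_closedBall_zero_iff.1 (hφ.mapsTo (mem_closedBall_zero_iff.2 ha))
  have hab : t * dist (s⁻¹ • z) (t⁻¹ • z) ≤ t - s := by
    have hinv : 0 ≤ s⁻¹ - t⁻¹ := sub_nonneg.2 (inv_anti₀ hs₀ hst)
    rw [dist_eq_norm, ← sub_smul, norm_smul, Real.norm_of_nonneg hinv]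
    calc t * ((s⁻¹ - t⁻¹) * ‖z‖) ≤ t * ((s⁻¹ - t⁻¹) * s) := by gcongr
      _ = t - s := by field_simp
  rw [alexanderSlice, alexanderSlice, if_pos hzs.le, if_pos hzt]
  calc dist (s • φ (s⁻¹ • z)) (t • φ (t⁻¹ • z))
        ≤ dist (s • φ (s⁻¹ • z)) (t • φ (s⁻¹ • z)) + dist (t • φ (s⁻¹ • z)) (t • φ (t⁻¹ • z)) :=
        dist_triangle _ _ _
    _ = (t - s) * ‖φ (s⁻¹ • z)‖ + t * dist (φ (s⁻¹ • z)) (φ (t⁻¹ • z)) := by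
        rw [dist_eq_norm, ← sub_smul, norm_smul, Real.norm_eq_abs, abs_sub_comm,
          abs_of_nonneg (by linarith), dist_smul₀, Real.norm_of_nonneg ht₀.le]
    _ ≤ (t - s) * 1 + t * (L * dist (s⁻¹ • z) (t⁻¹ • z)) := by
        gcongr
        exact (hφ.biLipschitzOn _ (mem_closedBall_zero_iff.2 ha) _
          (mem_closedBall_zero_iff.2 hb)).2
    _ ≤ (L + 1) * (t - s) := by nlinarith

theorem dist_alexanderSlice_le [Nontrivial E]
    (hφ : IsBiLipschitzFixingSphere L φ) (hL : 0 ≤ L) {s t : ℝ} (hs : 0 ≤ s) (ht : 0 ≤ t)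
    (z : E) : dist (alexanderSlice φ s z) (alexanderSlice φ t z) ≤ (L + 1) * dist s t := by
  rcases le_total s t with hst | hts
  · rw [Real.dist_eq, abs_sub_comm, abs_of_nonneg (by linarith)]
    exact hφ.dist_alexanderSlice_le_of_le hL hs hst z
  · rw [Real.dist_eq, abs_of_nonneg (by linarith), dist_comm]
    exact hφ.dist_alexanderSlice_le_of_le hL ht hts z

theorem surjOn_alexanderSlice (hφ : IsBiLipschitzFixingSphere L φ)
    (hsurj : SurjOn φ (closedBall 0 1) (closedBall 0 1)) {t : ℝ} (ht : t ∈ Icc (0 : ℝ) 1) :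
    SurjOn (alexanderSlice φ t) (closedBall 0 1) (closedBall 0 1) := by
  intro w hw
  rcases le_or_gt t ‖w‖ with htw | hwt
  · exact ⟨w, hw, hφ.alexanderSlice_of_le ht.1 htw⟩
  have ht₀ : 0 < t := (norm_nonneg w).trans_lt hwt
  obtain ⟨v, hv, hφv⟩ :=
    hsurj (mem_closedBall_zero_iff.2 ((norm_inv_smul_le_one_iff ht₀ w).2 hwt.le))
  have htv : ‖t • v‖ ≤ t := by
    rw [norm_smul, Real.norm_of_nonneg ht₀.le]
    exact mul_le_of_le_one_right ht₀.le (mem_closedBall_zero_iff.1 hv)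
  refine ⟨t • v, mem_closedBall_zero_iff.2 (htv.trans ht.2), ?_⟩
  rw [alexanderSlice, if_pos htv, inv_smul_smul₀ ht₀.ne', hφv, smul_inv_smul₀ ht₀.ne']

theorem bijOn_alexanderSlice [Nontrivial E]
    (hφ : IsBiLipschitzFixingSphere L φ) (hsurj : SurjOn φ (closedBall 0 1) (closedBall 0 1))
    (hL : 1 ≤ L) {t : ℝ} (ht : t ∈ Icc (0 : ℝ) 1) :
    BijOn (alexanderSlice φ t) (closedBall 0 1) (closedBall 0 1) :=
  ⟨mapsTo_alexanderSlice hφ.mapsTo ht,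
    ((hφ.biLipschitzOn_alexanderSlice hL ht.1).mono (subset_univ _)).injOn,
    hφ.surjOn_alexanderSlice hsurj ht⟩
end IsBiLipschitzFixingSphere

end AlexanderTrick

/-- The Alexander trick, bi-Lipschitz version. If `φ` is an `L`-bi-Lipschitz
homeomorphism of the closed unit disk fixing the boundary circle pointwise, then
the map `φ̄(z,t) = (t·φ(z/t), t)` for `|z| ≤ t`, `φ̄(z,t) = (z,t)` for `t ≤ |z| ≤ 1`
(and `φ̄(0,0) = (0,0)`) is a bijection of `D̄ × [0,1]` restricting to `φ` on
`D̄ × {1}`, equal to the identity on the rest of the boundary, and is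
`L'`-bi-Lipschitz (in the maximum metric) with `L'` depending only on `L`. -/
theorem alexander_trick_biLipschitz (L : ℝ) (hL : 1 ≤ L) :
    ∃ L' : ℝ, 1 ≤ L' ∧
      ∀ φ : ℂ → ℂ,
        Set.BijOn φ (Metric.closedBall 0 1) (Metric.closedBall 0 1) →
        (∀ z ∈ Metric.closedBall (0 : ℂ) 1, ∀ w ∈ Metric.closedBall (0 : ℂ) 1,
          dist z w / L ≤ dist (φ z) (φ w) ∧ dist (φ z) (φ w) ≤ L * dist z w) →
        (∀ z : ℂ, ‖z‖ = 1 → φ z = z) →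
        ∀ Φ : ℂ × ℝ → ℂ × ℝ,
          (∀ (z : ℂ), ∀ t ∈ Set.Icc (0 : ℝ) 1, ‖z‖ ≤ t →
            Φ (z, t) = ((t : ℂ) * φ (z / (t : ℂ)), t)) →
          (∀ z ∈ Metric.closedBall (0 : ℂ) 1, ∀ t ∈ Set.Icc (0 : ℝ) 1,
            t ≤ ‖z‖ → Φ (z, t) = (z, t)) →
          Set.BijOn Φ (Metric.closedBall (0 : ℂ) 1 ×ˢ Set.Icc (0 : ℝ) 1)
            (Metric.closedBall (0 : ℂ) 1 ×ˢ Set.Icc (0 : ℝ) 1) ∧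
          (∀ z ∈ Metric.closedBall (0 : ℂ) 1, Φ (z, 1) = (φ z, 1)) ∧
          (∀ z ∈ Metric.closedBall (0 : ℂ) 1, ∀ t ∈ Set.Icc (0 : ℝ) 1,
            t = 0 ∨ ‖z‖ = 1 → Φ (z, t) = (z, t)) ∧
          ∀ p ∈ Metric.closedBall (0 : ℂ) 1 ×ˢ Set.Icc (0 : ℝ) 1,
            ∀ q ∈ Metric.closedBall (0 : ℂ) 1 ×ˢ Set.Icc (0 : ℝ) 1,
              dist p q / L' ≤ dist (Φ p) (Φ q) ∧ dist (Φ p) (Φ q) ≤ L' * dist p q := by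
  have hK : 1 ≤ L ^ 2 + L + 1 := by nlinarith
  refine ⟨(L ^ 2 + L + 1) * (L ^ 2 + L + 1 + 1), by nlinarith, ?_⟩
  intro φ hbij hlip hbd Φ hΦin hΦout
  have hL₀ : 0 < L := zero_lt_one.trans_le hL
  have hφ : IsBiLipschitzFixingSphere L φ := ⟨hbij.mapsTo,
    fun z hz w hw => ⟨(div_le_iff₀' hL₀).1 (hlip z hz w hw).1, (hlip z hz w hw).2⟩, hbd⟩
  have hΦ : EqOn Φ (fun p => (alexanderSlice φ p.2 p.1, p.2)) (closedBall 0 1 ×ˢ Icc 0 1) := by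
    rintro ⟨z, t⟩ ⟨hz, ht⟩
    dsimp only
    by_cases hzt : ‖z‖ ≤ t
    · rw [hΦin z t ht hzt, alexanderSlice, if_pos hzt, Complex.real_smul, Complex.real_smul,
        Complex.ofReal_inv, div_eq_inv_mul]
    · rw [hΦout z hz t ht (not_le.1 hzt).le, alexanderSlice, if_neg hzt]
  have hbiLip := BiLipschitzOn.fibrewise (S := closedBall (0 : ℂ) 1) (I := Icc (0 : ℝ) 1) hK
    (fun t ht => (hφ.biLipschitzOn_alexanderSlice hL ht.1).mono (subset_univ (closedBall 0 1)))
    (fun z _ s hs t ht => (hφ.dist_alexanderSlice_le hL₀.le hs.1 ht.1 z).trans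
      (mul_le_mul_of_nonneg_right (by nlinarith) dist_nonneg))
  refine ⟨(bijOn_fibrewise fun t ht => hφ.bijOn_alexanderSlice hbij.surjOn hL ht).congr hΦ.symm,
    fun z hz => ?_, fun z hz t ht hface => hΦout z hz t ht ?_, fun p hp q hq => ?_⟩
  · simpa using hΦin z 1 ⟨zero_le_one, le_rfl⟩ (mem_closedBall_zero_iff.1 hz)
  · rcases hface with rfl | hz₁
    exacts [norm_nonneg z, hz₁ ▸ ht.2]
  · rw [hΦ hp, hΦ hq, div_le_iff₀ (by positivity), mul_comm]
    exact hbiLip p hp q hq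
end

section
/- For all r₁, r₂ ≥ 0 and all θ₁, θ₂ ∈ ℝ with |θ₂ − θ₁| ≤ π, one has |r₂·e^{iθ₂} − r₁·e^{iθ₁}| ≤ |r₂ − r₁| + r₁·|θ₂ − θ₁| and |r₂ − r₁| + r₁·|θ₂ − θ₁| ≤ (1 + π)·|r₂·e^{iθ₂} − r₁·e^{iθ₁}|. In other words, for angle differences of at most π the Euclidean distance between the points with polar coordinates (r₁,θ₁) and (r₂,θ₂) is comparable, with universal constants, to |r₂ − r₁| + r₁·|θ₂ − θ₁|. -/
/-!
Write the difference as `(r₂ - r₁) u + r₁ (u - v)` with unit vectors `u = e^{iθ₂}`,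
`v = e^{iθ₁}`. The triangle inequality gives the upper bound, and conversely both
`|r₂ - r₁|` and `r₁ ‖u - v‖ / 2` are at most the distance. It remains to compare the
chord `‖u - v‖ = 2 |sin ((θ₂ - θ₁) / 2)|` with the arc `|θ₂ - θ₁|`: it is at most the
arc, and by Jordan's inequality at least `2 / π` times the arc when the arc is at most `π`.
-/

section UnitVectors

variable {E : Type*} [SeminormedAddCommGroup E] [NormedSpace ℝ E] {u v : E} {r₁ r₂ : ℝ}

lemma norm_smul_sub_smul_le (hu : ‖u‖ = 1) (hr₁ : 0 ≤ r₁) :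
    ‖r₂ • u - r₁ • v‖ ≤ |r₂ - r₁| + r₁ * ‖u - v‖ :=
  calc ‖r₂ • u - r₁ • v‖ = ‖(r₂ - r₁) • u + r₁ • (u - v)‖ := by congr 1; module
    _ ≤ ‖(r₂ - r₁) • u‖ + ‖r₁ • (u - v)‖ := norm_add_le _ _
    _ = |r₂ - r₁| + r₁ * ‖u - v‖ := by
      rw [norm_smul, norm_smul, hu, mul_one, Real.norm_eq_abs, Real.norm_of_nonneg hr₁]

lemma abs_sub_le_norm_smul_sub_smul (hu : ‖u‖ = 1) (hv : ‖v‖ = 1) (hr₁ : 0 ≤ r₁)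
    (hr₂ : 0 ≤ r₂) : |r₂ - r₁| ≤ ‖r₂ • u - r₁ • v‖ := by
  simpa [norm_smul, hu, hv, abs_of_nonneg hr₁, abs_of_nonneg hr₂]
    using abs_norm_sub_norm_le (r₂ • u) (r₁ • v)

lemma mul_norm_sub_le_two_mul_norm_smul_sub_smul (hu : ‖u‖ = 1) (hv : ‖v‖ = 1)
    (hr₁ : 0 ≤ r₁) (hr₂ : 0 ≤ r₂) : r₁ * ‖u - v‖ ≤ 2 * ‖r₂ • u - r₁ • v‖ :=
  calc r₁ * ‖u - v‖ = ‖r₁ • (u - v)‖ := by rw [norm_smul, Real.norm_of_nonneg hr₁]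
    _ = ‖(r₂ • u - r₁ • v) - (r₂ - r₁) • u‖ := by congr 1; module
    _ ≤ ‖r₂ • u - r₁ • v‖ + |r₂ - r₁| := by
        simpa [norm_smul, hu] using norm_sub_le (r₂ • u - r₁ • v) ((r₂ - r₁) • u)
    _ ≤ 2 * ‖r₂ • u - r₁ • v‖ := by
        linarith [abs_sub_le_norm_smul_sub_smul hu hv hr₁ hr₂]

end UnitVectors

namespace Complex

lemma norm_exp_ofReal_mul_I_sub_exp_ofReal_mul_I (θ₁ θ₂ : ℝ) :
    ‖exp (θ₂ * I) - exp (θ₁ * I)‖ = 2 * |Real.sin ((θ₂ - θ₁) / 2)| := by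
  have hsplit : exp (θ₂ * I) - exp (θ₁ * I) = exp (θ₁ * I) * (exp (I * ↑(θ₂ - θ₁)) - 1) := by
    rw [mul_sub, mul_one, ← exp_add]; push_cast; ring_nf
  rw [hsplit, norm_mul, norm_exp_ofReal_mul_I, one_mul, norm_exp_I_mul_ofReal_sub_one,
    norm_mul, Real.norm_ofNat, Real.norm_eq_abs]

lemma norm_exp_ofReal_mul_I_sub_exp_ofReal_mul_I_le (θ₁ θ₂ : ℝ) :
    ‖exp (θ₂ * I) - exp (θ₁ * I)‖ ≤ |θ₂ - θ₁| := by
  rw [norm_exp_ofReal_mul_I_sub_exp_ofReal_mul_I]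
  linarith [Real.abs_sin_le_abs (x := (θ₂ - θ₁) / 2), abs_div (θ₂ - θ₁) 2]

lemma abs_sub_le_pi_div_two_mul_norm_exp_ofReal_mul_I_sub {θ₁ θ₂ : ℝ}
    (hθ : |θ₂ - θ₁| ≤ Real.pi) :
    |θ₂ - θ₁| ≤ Real.pi / 2 * ‖exp (θ₂ * I) - exp (θ₁ * I)‖ := by
  have hhalf : |(θ₂ - θ₁) / 2| = |θ₂ - θ₁| / 2 := by simp [abs_div]
  have jordan := Real.mul_abs_le_abs_sin (x := (θ₂ - θ₁) / 2) (by rw [hhalf]; linarith)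
  rw [hhalf] at jordan
  rw [norm_exp_ofReal_mul_I_sub_exp_ofReal_mul_I]
  field_simp at jordan ⊢
  linarith

end Complex

/-- For points given in polar coordinates with angle difference at most `π`, the
Euclidean distance is comparable to `|r₂ − r₁| + r₁·|θ₂ − θ₁|`:
`|r₂e^{iθ₂} − r₁e^{iθ₁}| ≤ |r₂ − r₁| + r₁|θ₂ − θ₁| ≤ (1+π)|r₂e^{iθ₂} − r₁e^{iθ₁}|`. -/
theorem polar_dist_comparable (r₁ r₂ θ₁ θ₂ : ℝ) (hr₁ : 0 ≤ r₁) (hr₂ : 0 ≤ r₂)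
    (hθ : |θ₂ - θ₁| ≤ Real.pi) :
    ‖(r₂ : ℂ) * Complex.exp ((θ₂ : ℂ) * Complex.I) -
        (r₁ : ℂ) * Complex.exp ((θ₁ : ℂ) * Complex.I)‖ ≤
      |r₂ - r₁| + r₁ * |θ₂ - θ₁| ∧
    |r₂ - r₁| + r₁ * |θ₂ - θ₁| ≤
      (1 + Real.pi) * ‖(r₂ : ℂ) * Complex.exp ((θ₂ : ℂ) * Complex.I) -
        (r₁ : ℂ) * Complex.exp ((θ₁ : ℂ) * Complex.I)‖ := by
  set u := Complex.exp (θ₂ * Complex.I)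
  set v := Complex.exp (θ₁ * Complex.I)
  have hu : ‖u‖ = 1 := Complex.norm_exp_ofReal_mul_I θ₂
  have hv : ‖v‖ = 1 := Complex.norm_exp_ofReal_mul_I θ₁
  have hchord : |θ₂ - θ₁| ≤ Real.pi / 2 * ‖u - v‖ :=
    Complex.abs_sub_le_pi_div_two_mul_norm_exp_ofReal_mul_I_sub hθ
  simp only [← Complex.real_smul]
  constructor
  · calc ‖r₂ • u - r₁ • v‖ ≤ |r₂ - r₁| + r₁ * ‖u - v‖ := norm_smul_sub_smul_le hu hr₁
      _ ≤ |r₂ - r₁| + r₁ * |θ₂ - θ₁| := by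
        gcongr; exact Complex.norm_exp_ofReal_mul_I_sub_exp_ofReal_mul_I_le θ₁ θ₂
  · calc |r₂ - r₁| + r₁ * |θ₂ - θ₁| ≤ |r₂ - r₁| + Real.pi / 2 * (r₁ * ‖u - v‖) := by
          linarith [mul_le_mul_of_nonneg_left hchord hr₁]
      _ ≤ ‖r₂ • u - r₁ • v‖ + Real.pi / 2 * (2 * ‖r₂ • u - r₁ • v‖) := by
          gcongr ?_ + Real.pi / 2 * ?_
          · exact abs_sub_le_norm_smul_sub_smul hu hv hr₁ hr₂
          · exact mul_norm_sub_le_two_mul_norm_smul_sub_smul hu hv hr₁ hr₂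
      _ = (1 + Real.pi) * ‖r₂ • u - r₁ • v‖ := by ring
end

section
/- (Radial extension from the sphere to the ball.) Let ψ : 𝕊² → 𝕊² be an L-bi-Lipschitz map of the unit sphere 𝕊² = {x ∈ ℝ³ : |x| = 1} to itself, L ≥ 1. Define ψ̄ on the closed unit ball 𝔹 = {x ∈ ℝ³ : |x| ≤ 1} by ψ̄(x) := |x|·ψ(x/|x|) for x ≠ 0 and ψ̄(0) := 0. Then ψ̄ : 𝔹 → 𝔹 is L'-bi-Lipschitz for some constant L' depending only on L. -/
open scoped RealInnerProductSpace

lemma radial_key {E : Type*} [NormedAddCommGroup E] [InnerProductSpace ℝ E]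
    (a b : ℝ) (u v : E) (hu : ‖u‖ = 1) (hv : ‖v‖ = 1) :
    ‖a • u - b • v‖ ^ 2 = (a - b) ^ 2 + a * b * ‖u - v‖ ^ 2 := by
  have h1 := norm_sub_sq_real (a • u) (b • v)
  have h2 := norm_sub_sq_real u v
  simp only [inner_smul_left, inner_smul_right, norm_smul, Real.norm_eq_abs,
    hu, hv, mul_one] at h1 h2
  simp only [conj_trivial] at h1
  rw [sq_abs, sq_abs] at h1
  linear_combination h1 - a * b * h2

lemma sq_le_sq_imp {a b : ℝ} (ha : 0 ≤ a) (hb : 0 ≤ b) (h : a ^ 2 ≤ b ^ 2) : a ≤ b := by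
  nlinarith

lemma radial_bounds_aux (L a b z w d D : ℝ) (hL : 1 ≤ L) (ha : 0 < a) (hb : 0 < b)
    (hd : 0 ≤ d) (hD : 0 ≤ D)
    (k1 : d ^ 2 = (a - b) ^ 2 + a * b * z ^ 2)
    (k2 : D ^ 2 = (a - b) ^ 2 + a * b * w ^ 2)
    (hz : 0 ≤ z) (hw : 0 ≤ w)
    (hlo : z ≤ w * L) (hhi : w ≤ L * z) :
    d / L ≤ D ∧ D ≤ L * d := by
  have hL0 : 0 < L := lt_of_lt_of_le one_pos hL
  have hL2 : 1 ≤ L ^ 2 := by nlinarith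
  have hz2 : z ^ 2 ≤ w ^ 2 * L ^ 2 := by nlinarith
  have hw2 : w ^ 2 ≤ L ^ 2 * z ^ 2 := by nlinarith
  constructor
  · rw [div_le_iff₀ hL0]
    refine sq_le_sq_imp hd (by positivity) ?_
    rw [mul_pow, k1, k2]
    nlinarith [mul_nonneg (mul_pos ha hb).le (sub_nonneg.mpr hz2),
      mul_nonneg (sq_nonneg (a - b)) (sub_nonneg.mpr hL2)]
  · refine sq_le_sq_imp hD (by positivity) ?_
    rw [mul_pow, k1, k2]
    nlinarith [mul_nonneg (mul_pos ha hb).le (sub_nonneg.mpr hw2),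
      mul_nonneg (sq_nonneg (a - b)) (sub_nonneg.mpr hL2)]

/-- Radial extension from the sphere to the ball: if `ψ : 𝕊² → 𝕊²` is an
`L`-bi-Lipschitz map of the unit sphere of ℝ³ to itself, then the radial
extension `ψ̄(x) = |x|·ψ(x/|x|)`, `ψ̄(0) = 0`, is an `L'`-bi-Lipschitz map of
the closed unit ball to itself, with `L'` depending only on `L`. -/
theorem radial_extension_sphere_to_ball (L : ℝ) (hL : 1 ≤ L) :
    ∃ L' : ℝ, 1 ≤ L' ∧
      ∀ ψ : EuclideanSpace ℝ (Fin 3) → EuclideanSpace ℝ (Fin 3),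
        (∀ x : EuclideanSpace ℝ (Fin 3), ‖x‖ = 1 → ‖ψ x‖ = 1) →
        (∀ x y : EuclideanSpace ℝ (Fin 3), ‖x‖ = 1 → ‖y‖ = 1 →
          dist x y / L ≤ dist (ψ x) (ψ y) ∧ dist (ψ x) (ψ y) ≤ L * dist x y) →
        ∀ Ψ : EuclideanSpace ℝ (Fin 3) → EuclideanSpace ℝ (Fin 3),
          Ψ 0 = 0 →
          (∀ x : EuclideanSpace ℝ (Fin 3), x ≠ 0 → Ψ x = ‖x‖ • ψ (‖x‖⁻¹ • x)) →
          Set.MapsTo Ψ (Metric.closedBall 0 1) (Metric.closedBall 0 1) ∧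
          ∀ x ∈ Metric.closedBall (0 : EuclideanSpace ℝ (Fin 3)) 1,
            ∀ y ∈ Metric.closedBall (0 : EuclideanSpace ℝ (Fin 3)) 1,
              dist x y / L' ≤ dist (Ψ x) (Ψ y) ∧ dist (Ψ x) (Ψ y) ≤ L' * dist x y := by
  refine ⟨L, hL, fun ψ hψ1 hψ2 Ψ hΨ0 hΨ => ?_⟩
  have hL0 : 0 < L := lt_of_lt_of_le one_pos hL
  -- unit vector fact
  have hunit : ∀ x : EuclideanSpace ℝ (Fin 3), x ≠ 0 → ‖‖x‖⁻¹ • x‖ = 1 := by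
    intro x hx
    rw [norm_smul, Real.norm_eq_abs, abs_inv, abs_norm,
      inv_mul_cancel₀ (norm_ne_zero_iff.mpr hx)]
  have hnorm : ∀ x : EuclideanSpace ℝ (Fin 3), ‖Ψ x‖ = ‖x‖ := by
    intro x
    by_cases hx : x = 0
    · simp [hx, hΨ0]
    · rw [hΨ x hx, norm_smul, Real.norm_eq_abs, abs_norm,
        hψ1 _ (hunit x hx), mul_one]
  constructor
  · intro x hx
    simp only [Metric.mem_closedBall, dist_zero_right] at *
    rw [hnorm]; exact hx
  intro x _ y _
  -- handle zero cases
  by_cases hx : x = 0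
  · subst hx
    rw [hΨ0, dist_comm (0 : EuclideanSpace ℝ (Fin 3)) (Ψ y), dist_zero_right, hnorm,
      dist_comm, dist_zero_right]
    constructor
    · exact div_le_self (norm_nonneg _) hL
    · exact le_mul_of_one_le_left (norm_nonneg _) hL
  by_cases hy : y = 0
  · subst hy
    simp only [hΨ0, dist_zero_right, hnorm]
    constructor
    · exact div_le_self (norm_nonneg _) hL
    · exact le_mul_of_one_le_left (norm_nonneg _) hL
  -- main case
  set a := ‖x‖ with ha_def
  set b := ‖y‖ with hb_def
  have ha : 0 < a := norm_pos_iff.mpr hx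
  have hb : 0 < b := norm_pos_iff.mpr hy
  set u : EuclideanSpace ℝ (Fin 3) := a⁻¹ • x with hu_def
  set v : EuclideanSpace ℝ (Fin 3) := b⁻¹ • y with hv_def
  have hu : ‖u‖ = 1 := hunit x hx
  have hv : ‖v‖ = 1 := hunit y hy
  have hxu : x = a • u := by rw [hu_def, smul_inv_smul₀ ha.ne']
  have hyv : y = b • v := by rw [hv_def, smul_inv_smul₀ hb.ne']
  have hΨx : Ψ x = a • ψ u := hΨ x hx
  have hΨy : Ψ y = b • ψ v := hΨ y hy
  have hψu : ‖ψ u‖ = 1 := hψ1 u hu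
  have hψv : ‖ψ v‖ = 1 := hψ1 v hv
  have key1 : dist x y ^ 2 = (a - b) ^ 2 + a * b * ‖u - v‖ ^ 2 := by
    rw [dist_eq_norm]; nth_rewrite 1 [hxu, hyv]; exact radial_key a b u v hu hv
  have key2 : dist (Ψ x) (Ψ y) ^ 2 = (a - b) ^ 2 + a * b * ‖ψ u - ψ v‖ ^ 2 := by
    rw [dist_eq_norm, hΨx, hΨy]; exact radial_key a b (ψ u) (ψ v) hψu hψv
  obtain ⟨hlo, hhi⟩ := hψ2 u v hu hv
  rw [dist_eq_norm, dist_eq_norm, div_le_iff₀ hL0] at hlo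
  rw [dist_eq_norm, dist_eq_norm] at hhi
  have hz : (0:ℝ) ≤ ‖u - v‖ := norm_nonneg _
  have hw : (0:ℝ) ≤ ‖ψ u - ψ v‖ := norm_nonneg _
  exact radial_bounds_aux L a b _ _ _ _ hL ha hb dist_nonneg dist_nonneg key1 key2 hz hw hlo hhi
end

section
/- Let X be a metric space, L > 0 and 0 < m ≤ M, and let ρ₀, ρ₁ : X → ℝ be L-Lipschitz functions with ρ₀(x) + m ≤ ρ₁(x) ≤ ρ₀(x) + M for all x ∈ X. Define φ : X × [0,1] → X × ℝ by φ(x,t) := (x, (1−t)·ρ₀(x) + t·ρ₁(x)). Then: (i) for all x, y ∈ X and s, t ∈ [0,1], |((1−t)ρ₀(x) + tρ₁(x)) − ((1−s)ρ₀(y) + sρ₁(y))| ≤ L·d(x,y) + M·|t−s|; and (ii) writing u := (1−t)ρ₀(x) + tρ₁(x) and v := (1−s)ρ₀(y) + sρ₁(y), one has |t−s| ≤ (2LM/m²)·d(x,y) + (M/m²)·|u−v|. In particular φ is bi-Lipschitz onto its image, with constant depending only on L, M, m, when X × [0,1] and X × ℝ carry the maximum metric. -/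
universe u

/-- Quantitative estimates for the map `φ(x,t) = (x, (1−t)ρ₀(x) + tρ₁(x))`, where
`ρ₀, ρ₁ : X → ℝ` are `L`-Lipschitz and `ρ₀ + m ≤ ρ₁ ≤ ρ₀ + M` (`0 < m ≤ M`):
(i) `|((1−t)ρ₀(x)+tρ₁(x)) − ((1−s)ρ₀(y)+sρ₁(y))| ≤ L·d(x,y) + M·|t−s|`, and
(ii) `|t−s| ≤ (2LM/m²)·d(x,y) + (M/m²)·|u−v|` where `u, v` are the respective
second coordinates. In particular `φ` is bi-Lipschitz onto its image (maximum
metrics), with a constant depending only on `L`, `M`, `m`. -/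
theorem interpolation_map_biLipschitz (L M m : ℝ) (hL : 0 < L) (hm : 0 < m) (hmM : m ≤ M) :
    ∃ K : ℝ, 0 < K ∧
      ∀ (X : Type u) [MetricSpace X],
        ∀ ρ₀ ρ₁ : X → ℝ,
          (∀ x y : X, |ρ₀ x - ρ₀ y| ≤ L * dist x y) →
          (∀ x y : X, |ρ₁ x - ρ₁ y| ≤ L * dist x y) →
          (∀ x : X, ρ₀ x + m ≤ ρ₁ x ∧ ρ₁ x ≤ ρ₀ x + M) →
          (∀ (x y : X), ∀ t ∈ Set.Icc (0 : ℝ) 1, ∀ s ∈ Set.Icc (0 : ℝ) 1,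
            |((1 - t) * ρ₀ x + t * ρ₁ x) - ((1 - s) * ρ₀ y + s * ρ₁ y)| ≤
              L * dist x y + M * |t - s|) ∧
          (∀ (x y : X), ∀ t ∈ Set.Icc (0 : ℝ) 1, ∀ s ∈ Set.Icc (0 : ℝ) 1,
            |t - s| ≤ (2 * L * M / m ^ 2) * dist x y +
              (M / m ^ 2) * |((1 - t) * ρ₀ x + t * ρ₁ x) - ((1 - s) * ρ₀ y + s * ρ₁ y)|) ∧
          ∀ (x y : X), ∀ t ∈ Set.Icc (0 : ℝ) 1, ∀ s ∈ Set.Icc (0 : ℝ) 1,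
            max (dist x y) |t - s| / K ≤
              max (dist x y)
                |((1 - t) * ρ₀ x + t * ρ₁ x) - ((1 - s) * ρ₀ y + s * ρ₁ y)| ∧
            max (dist x y)
                |((1 - t) * ρ₀ x + t * ρ₁ x) - ((1 - s) * ρ₀ y + s * ρ₁ y)| ≤
              K * max (dist x y) |t - s| := by
  have hM0 : (0 : ℝ) < M := lt_of_lt_of_le hm hmM
  have hm2 : (0 : ℝ) < m ^ 2 := by positivity
  obtain ⟨K, hKdef⟩ : ∃ K : ℝ, K = 1 + L + M + 2 * L * M / m ^ 2 + M / m ^ 2 := ⟨_, rfl⟩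
  refine ⟨K, by rw [hKdef]; positivity, ?_⟩
  intro X _ ρ₀ ρ₁ h0 h1 hb
  have hA : (0 : ℝ) ≤ 2 * L * M / m ^ 2 := by positivity
  have hB : (0 : ℝ) ≤ M / m ^ 2 := by positivity
  have hK1 : (1 : ℝ) ≤ K := by
    have : (0 : ℝ) ≤ L + M := by positivity
    rw [hKdef]
    have h2 : (0:ℝ) ≤ 2 * L * M / m ^ 2 + M / m ^ 2 := by positivity
    linarith
  have hKpos : (0 : ℝ) < K := by linarith
  have hi : ∀ (x y : X), ∀ t ∈ Set.Icc (0 : ℝ) 1, ∀ s ∈ Set.Icc (0 : ℝ) 1,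
      |((1 - t) * ρ₀ x + t * ρ₁ x) - ((1 - s) * ρ₀ y + s * ρ₁ y)| ≤
        L * dist x y + M * |t - s| := by
    intro x y t ht s hs
    obtain ⟨ht0, ht1⟩ := ht
    have h0' := h0 x y
    have h1' := h1 x y
    have hby := hb y
    have hd : (0 : ℝ) ≤ dist x y := dist_nonneg
    have key : ((1 - t) * ρ₀ x + t * ρ₁ x) - ((1 - s) * ρ₀ y + s * ρ₁ y)
        = (1 - t) * (ρ₀ x - ρ₀ y) + t * (ρ₁ x - ρ₁ y) + (t - s) * (ρ₁ y - ρ₀ y) := by ring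
    have hM : |ρ₁ y - ρ₀ y| ≤ M := by
      rw [abs_le]; constructor <;> [linarith [hby.1]; linarith [hby.2]]
    rw [key]
    calc |(1 - t) * (ρ₀ x - ρ₀ y) + t * (ρ₁ x - ρ₁ y) + (t - s) * (ρ₁ y - ρ₀ y)|
        ≤ |(1 - t) * (ρ₀ x - ρ₀ y)| + |t * (ρ₁ x - ρ₁ y)| + |(t - s) * (ρ₁ y - ρ₀ y)| :=
          abs_add_three _ _ _
      _ = (1 - t) * |ρ₀ x - ρ₀ y| + t * |ρ₁ x - ρ₁ y| + |t - s| * |ρ₁ y - ρ₀ y| := by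
          rw [abs_mul, abs_mul, abs_mul, abs_of_nonneg (by linarith : (0:ℝ) ≤ 1 - t),
            abs_of_nonneg ht0]
      _ ≤ L * dist x y + M * |t - s| := by
          nlinarith [abs_nonneg (t - s), abs_nonneg (ρ₀ x - ρ₀ y), abs_nonneg (ρ₁ x - ρ₁ y)]
  have hii : ∀ (x y : X), ∀ t ∈ Set.Icc (0 : ℝ) 1, ∀ s ∈ Set.Icc (0 : ℝ) 1,
      |t - s| ≤ (2 * L * M / m ^ 2) * dist x y +
        (M / m ^ 2) * |((1 - t) * ρ₀ x + t * ρ₁ x) - ((1 - s) * ρ₀ y + s * ρ₁ y)| := by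
    intro x y t ht s hs
    obtain ⟨ht0, ht1⟩ := ht
    set D : ℝ := ((1 - t) * ρ₀ x + t * ρ₁ x) - ((1 - s) * ρ₀ y + s * ρ₁ y) with hD
    have h0' := h0 x y
    have h1' := h1 x y
    have hby := hb y
    have hd : (0 : ℝ) ≤ dist x y := dist_nonneg
    have key : (t - s) * (ρ₁ y - ρ₀ y)
        = D - ((1 - t) * (ρ₀ x - ρ₀ y) + t * (ρ₁ x - ρ₁ y)) := by rw [hD]; ring
    have hmabs : m * |t - s| ≤ |D| + L * dist x y := by
      have h2 : m * |t - s| ≤ |(t - s) * (ρ₁ y - ρ₀ y)| := by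
        rw [abs_mul]
        have : m ≤ |ρ₁ y - ρ₀ y| := le_trans (by linarith [hby.1]) (le_abs_self _)
        nlinarith [abs_nonneg (t - s)]
      have h3 : |(t - s) * (ρ₁ y - ρ₀ y)| ≤ |D| + L * dist x y := by
        rw [key]
        calc |D - ((1 - t) * (ρ₀ x - ρ₀ y) + t * (ρ₁ x - ρ₁ y))|
            ≤ |D| + |(1 - t) * (ρ₀ x - ρ₀ y) + t * (ρ₁ x - ρ₁ y)| := abs_sub _ _
          _ ≤ |D| + ((1 - t) * |ρ₀ x - ρ₀ y| + t * |ρ₁ x - ρ₁ y|) := by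
              have := abs_add_le ((1 - t) * (ρ₀ x - ρ₀ y)) (t * (ρ₁ x - ρ₁ y))
              rw [abs_mul, abs_mul, abs_of_nonneg (by linarith : (0:ℝ) ≤ 1 - t),
                abs_of_nonneg ht0] at this
              linarith
          _ ≤ |D| + L * dist x y := by
              nlinarith [abs_nonneg (ρ₀ x - ρ₀ y), abs_nonneg (ρ₁ x - ρ₁ y)]
      linarith
    rw [div_mul_eq_mul_div, div_mul_eq_mul_div, ← add_div, le_div_iff₀ hm2]
    nlinarith [mul_le_mul_of_nonneg_left hmabs hM0.le,
      mul_nonneg (mul_nonneg (sub_nonneg.2 hmM) hm.le) (abs_nonneg (t - s)),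
      mul_nonneg (mul_nonneg hM0.le hL.le) hd]
  refine ⟨hi, hii, ?_⟩
  intro x y t ht s hs
  set D : ℝ := ((1 - t) * ρ₀ x + t * ρ₁ x) - ((1 - s) * ρ₀ y + s * ρ₁ y) with hD
  have hd : (0 : ℝ) ≤ dist x y := dist_nonneg
  have hts : (0 : ℝ) ≤ |t - s| := abs_nonneg _
  have hDn : (0 : ℝ) ≤ |D| := abs_nonneg _
  have hmax1 : (0 : ℝ) ≤ max (dist x y) |t - s| := le_trans hd (le_max_left _ _)
  have hmax2 : (0 : ℝ) ≤ max (dist x y) |D| := le_trans hd (le_max_left _ _)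
  constructor
  · rw [div_le_iff₀ hKpos]
    refine max_le ?_ ?_
    · calc dist x y ≤ max (dist x y) |D| := le_max_left _ _
        _ ≤ max (dist x y) |D| * K := le_mul_of_one_le_right hmax2 hK1
    · have h2 := hii x y t ht s hs
      calc |t - s| ≤ (2 * L * M / m ^ 2) * dist x y + (M / m ^ 2) * |D| := h2
        _ ≤ max (dist x y) |D| * K := by
            have := le_max_left (dist x y) |D|
            have := le_max_right (dist x y) |D|
            nlinarith [mul_le_mul_of_nonneg_left (le_max_left (dist x y) |D|) hA,
              mul_le_mul_of_nonneg_left (le_max_right (dist x y) |D|) hB,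
              mul_nonneg hA hmax2, mul_nonneg hB hmax2]
  · refine max_le ?_ ?_
    · calc dist x y ≤ max (dist x y) |t - s| := le_max_left _ _
        _ ≤ K * max (dist x y) |t - s| := le_mul_of_one_le_left hmax1 hK1
    · have h1' := hi x y t ht s hs
      calc |D| ≤ L * dist x y + M * |t - s| := h1'
        _ ≤ K * max (dist x y) |t - s| := by
            have e1 := mul_le_mul_of_nonneg_left (le_max_left (dist x y) |t - s|) hL.le
            have e2 := mul_le_mul_of_nonneg_left (le_max_right (dist x y) |t - s|) hM0.le
            have e3 : (0 : ℝ) ≤ (1 + 2 * L * M / m ^ 2 + M / m ^ 2) * max (dist x y) |t - s| :=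
              mul_nonneg (by positivity) hmax1
            have e4 : K * max (dist x y) |t - s| =
                L * max (dist x y) |t - s| + M * max (dist x y) |t - s| +
                  (1 + 2 * L * M / m ^ 2 + M / m ^ 2) * max (dist x y) |t - s| := by
              rw [hKdef]; ring
            linarith
end
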